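/- arXiv:1603.02223 — 10 statements merged into one kernel-verified Lean document; each statement's English description precedes it below -/
import Mathlib

section
/- A generator L of a continuous-time Markov chain on a finite poset S is the generator of a realizably monotone Markov chain if and only if there exists a nonnegative function Λ on the set M of increasing maps from S to S such that for all x ≠ y in S, L_{x,y} = Σ_{f ∈ M : f(x)=y} Λ(f). -/
open Finset

section Defs

variable {S : Type*}

/-- An infinitesimal generator: nonnegative off-diagonal entries and zero row sums. -/
def IsGenerator [Fintype S] (L : S → S → ℝ) : Prop :=
  (∀ x y : S, x ≠ y → 0 ≤ L x y) ∧ ∀ x : S, ∑ y, L x y = 0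

/-- An up-set of a poset. -/
def IsUpSet [LE S] (Γ : Finset S) : Prop := ∀ x ∈ Γ, ∀ y : S, x ≤ y → y ∈ Γ

/-- A down-set of a poset. -/
def IsDownSet [LE S] (Γ : Finset S) : Prop := ∀ x ∈ Γ, ∀ y : S, y ≤ x → y ∈ Γ

/-- Stochastic monotonicity of a generator, via up-set and down-set inequalities. -/
def StochMonGen [Fintype S] [PartialOrder S] (L : S → S → ℝ) : Prop :=
  (∀ Γ : Finset S, IsUpSet Γ → ∀ x y : S, x ≤ y → x ∉ Γ → y ∉ Γ →
      ∑ z ∈ Γ, L x z ≤ ∑ z ∈ Γ, L y z) ∧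
  (∀ Γ : Finset S, IsDownSet Γ → ∀ x y : S, x ≤ y → x ∉ Γ → y ∉ Γ →
      ∑ z ∈ Γ, L y z ≤ ∑ z ∈ Γ, L x z)

/-- Realizable monotonicity of a generator: the off-diagonal part is a nonnegative
combination of indicator matrices of increasing (order-preserving) self-maps. -/
def RealizablyMonotoneGen [Fintype S] [DecidableEq S] [PartialOrder S]
    (L : S → S → ℝ) : Prop :=
  ∃ Λ : (S → S) → ℝ, (∀ f, 0 ≤ Λ f) ∧ (∀ f, ¬ Monotone f → Λ f = 0) ∧
    ∀ x y : S, x ≠ y →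
      L x y = ∑ f ∈ Finset.univ.filter (fun f : S → S => f x = y), Λ f

/-- A transition matrix: nonnegative entries, row sums one. -/
def IsTransition [Fintype S] (P : S → S → ℝ) : Prop :=
  (∀ x y : S, 0 ≤ P x y) ∧ ∀ x : S, ∑ y, P x y = 1

/-- Stochastic monotonicity of a transition matrix: for every up-set `Γ`,
`x ↦ P(x,Γ)` is increasing. -/
def StochMonTrans [Fintype S] [PartialOrder S] (P : S → S → ℝ) : Prop :=
  ∀ Γ : Finset S, IsUpSet Γ → ∀ x y : S, x ≤ y →
    ∑ z ∈ Γ, P x z ≤ ∑ z ∈ Γ, P y z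

/-- Realizable monotonicity of a transition matrix: it is a mixture of the (full,
including diagonal) indicator matrices of increasing self-maps. -/
def RealizablyMonotoneTrans [Fintype S] [DecidableEq S] [PartialOrder S]
    (P : S → S → ℝ) : Prop :=
  ∃ Pr : (S → S) → ℝ, (∀ f, 0 ≤ Pr f) ∧ (∀ f, ¬ Monotone f → Pr f = 0) ∧
    (∑ f : S → S, Pr f = 1) ∧
    ∀ x y : S, P x y = ∑ f ∈ Finset.univ.filter (fun f : S → S => f x = y), Pr f

end Defs

/-- **Proposition 2.1.** A generator `L` on a finite poset generates a realizably
monotone Markov chain (i.e. there is a generator `𝓛` on `S^S` whose chain starts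
order-preservingly from the identity, jumps from monotone maps only to monotone maps,
and whose one-point motions all have generator `L`) if and only if there is a
nonnegative weight `Λ` on increasing maps with
`L x y = ∑_{f increasing, f x = y} Λ f` for `x ≠ y`. -/
theorem stmt0 {S : Type*} [Fintype S] [DecidableEq S] [PartialOrder S]
    (L : S → S → ℝ) (hL : IsGenerator L) :
    (∃ 𝓛 : (S → S) → (S → S) → ℝ,
      (∀ f g : S → S, f ≠ g → 0 ≤ 𝓛 f g) ∧ (∀ f : S → S, ∑ g, 𝓛 f g = 0) ∧
      (∀ f g : S → S, Monotone f → f ≠ g → 𝓛 f g ≠ 0 → Monotone g) ∧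
      (∀ z x y : S, x ≠ y → ∀ f : S → S, f z = x →
        L x y = ∑ g ∈ Finset.univ.filter (fun g : S → S => g z = y), 𝓛 f g)) ↔
    RealizablyMonotoneGen L := by

  constructor
  · rintro ⟨𝓛, hnn, hrow, hmono, hkey⟩
    refine ⟨fun g => if g = id then 0 else 𝓛 id g, ?_, ?_, ?_⟩
    · intro f
      beta_reduce
      by_cases h : f = id
      · simp [h]
      · rw [if_neg h]
        exact hnn id f (Ne.symm h)
    · intro f hf
      have hne : f ≠ id := fun h => hf (h ▸ monotone_id)
      beta_reduce
      rw [if_neg hne]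
      by_contra h
      exact hf (hmono id f monotone_id (Ne.symm hne) h)
    · intro x y hxy
      rw [hkey x x y hxy id rfl]
      refine Finset.sum_congr rfl fun g hg => ?_
      simp only [mem_filter] at hg
      have : g ≠ id := fun h => hxy (by subst h; exact hg.2)
      show 𝓛 id g = if g = id then 0 else 𝓛 id g
      rw [if_neg this]
  · rintro ⟨Λ, hΛnn, hΛmono, hΛeq⟩
    set w : (S → S) → (S → S) → ℝ :=
      fun f g => ∑ φ ∈ univ.filter (fun φ => φ ∘ f = g), Λ φ with hw
    refine ⟨fun f g => if g = f then -(∑ g' ∈ univ.erase f, w f g') else w f g,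
      ?_, ?_, ?_, ?_⟩
    · intro f g hfg
      beta_reduce
      rw [if_neg (Ne.symm hfg)]
      exact Finset.sum_nonneg fun φ _ => hΛnn φ
    · intro f
      beta_reduce
      rw [← Finset.add_sum_erase _ _ (mem_univ f), if_pos rfl,
        Finset.sum_congr rfl fun g hg => if_neg (Finset.ne_of_mem_erase hg)]
      ring
    · intro f g hf hfg h
      beta_reduce at h
      rw [if_neg (Ne.symm hfg)] at h
      obtain ⟨φ, hφ, hφne⟩ := Finset.exists_ne_zero_of_sum_ne_zero h
      simp only [mem_filter] at hφ
      have hm : Monotone φ := not_not.mp fun hc => hφne (hΛmono φ hc)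
      exact hφ.2 ▸ hm.comp hf
    · intro z x y hxy f hfz
      beta_reduce
      have step1 : ∀ g ∈ univ.filter (fun g : S → S => g z = y),
          (if g = f then -(∑ g' ∈ univ.erase f, w f g') else w f g) = w f g := by
        intro g hg
        simp only [mem_filter] at hg
        have : g ≠ f := fun h => hxy (by rw [← hfz, ← h, hg.2])
        rw [if_neg this]
      rw [Finset.sum_congr rfl step1]
      have inner : ∀ g ∈ univ.filter (fun g : S → S => g z = y),
          w f g = ∑ φ ∈ (univ.filter (fun φ : S → S => φ x = y)).filter
            (fun φ => φ ∘ f = g), Λ φ := by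
        intro g hg
        simp only [mem_filter, mem_univ, true_and] at hg
        refine Finset.sum_congr ?_ fun _ _ => rfl
        ext φ
        simp only [mem_filter, mem_univ, true_and]
        constructor
        · intro hφ
          refine ⟨?_, hφ⟩
          have := congrFun hφ z
          simpa [hfz, hg] using this
        · exact fun h => h.2
      rw [Finset.sum_congr rfl inner,
        Finset.sum_fiberwise_of_maps_to (g := fun φ : S → S => φ ∘ f) ?_ Λ]
      · exact hΛeq x y hxy
      · intro φ hφ
        simp only [mem_filter, mem_univ, true_and] at hφ ⊢
        show φ (f z) = y
        rw [hfz, hφ]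
end

section
/- If Λ : M → ℝ₊ satisfies L_{x,y} = Σ_{f ∈ M : f(x)=y} Λ(f) for all x ≠ y, then defining 𝓛_{f,g} := Σ_{h ∈ M : g = h∘f} Λ(h) yields a generator on S^S whose one-point motions each have generator L; that is, for every z ∈ S, every f ∈ S^S with f(z)=x, and every y ≠ x, one has L_{x,y} = Σ_{g ∈ S^S : g(z)=y} 𝓛_{f,g}. -/
open Finset

/-- If `Λ : M → ℝ₊` realizes `L`, then the generator `𝓛 f g := ∑_{h ∈ M, g = h ∘ f} Λ h`
on `S^S` has one-point motions with generator `L`:  for every `z`, every `f` with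
`f z = x` and every `y ≠ x`, `L x y = ∑_{g : g z = y} 𝓛 f g`. -/
theorem stmt1 {S : Type*} [Fintype S] [DecidableEq S] [PartialOrder S]
    (L : S → S → ℝ) (hL : IsGenerator L) (Λ : (S → S) → ℝ)
    (hΛ : ∀ f, 0 ≤ Λ f) (hsupp : ∀ f, ¬ Monotone f → Λ f = 0)
    (hrep : ∀ x y : S, x ≠ y →
      L x y = ∑ f ∈ Finset.univ.filter (fun f : S → S => f x = y), Λ f) :
    ∀ z x y : S, x ≠ y → ∀ f : S → S, f z = x →
      L x y = ∑ g ∈ Finset.univ.filter (fun g : S → S => g z = y),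
        ∑ h ∈ Finset.univ.filter (fun h : S → S => g = h ∘ f), Λ h := by
  intro z x y hxy f hfz
  have : ∀ g : S → S, (Finset.univ.filter (fun h : S → S => g = h ∘ f))
      = (Finset.univ.filter (fun h : S → S => (fun h : S → S => h ∘ f) h = g)) := by
    intro g; apply Finset.filter_congr; intro h _; simp [eq_comm]
  simp_rw [this]
  rw [Finset.sum_fiberwise_eq_sum_filter]
  rw [hrep x y hxy]
  apply Finset.sum_congr
  · apply Finset.filter_congr; intro h _
    simp [Function.comp, hfz]
  · intros; rfl
end

section
/- For every increasing function f : S → S, every up-set Γ ⊆ S, and every pair x ≤ y with y ∉ Γ (respectively x ≥ y with y ∈ Γ), the indicator matrix 𝕀_f satisfies ⟨𝕀_f, W^{Γ,x,y}⟩ ≥ 0; consequently every realizably monotone generator is stochastically monotone, i.e. G_{r.mon} ⊆ G_{mon}. -/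
open Finset

private lemma indic_sum {S : Type*} [Fintype S] [DecidableEq S]
    (Γ : Finset S) (a : S) :
    ∑ z ∈ Γ, (if a = z then (1 : ℝ) else 0) = if a ∈ Γ then 1 else 0 :=
  Finset.sum_ite_eq Γ a (fun _ => 1)

private lemma row_sum_aux {S : Type*} [Fintype S] [DecidableEq S]
    (Λ : (S → S) → ℝ) (L : S → S → ℝ) (Γ : Finset S) (x : S) (hx : x ∉ Γ)
    (hL : ∀ x y : S, x ≠ y →
      L x y = ∑ f ∈ Finset.univ.filter (fun f : S → S => f x = y), Λ f) :
    ∑ z ∈ Γ, L x z = ∑ f : S → S, (if f x ∈ Γ then Λ f else 0) := by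
  have h1 : ∀ z ∈ Γ, L x z = ∑ f : S → S, (if f x = z then Λ f else 0) := by
    intro z hz
    rw [hL x z (by rintro rfl; exact hx hz), Finset.sum_filter]
  rw [Finset.sum_congr rfl h1, Finset.sum_comm]
  refine Finset.sum_congr rfl fun f _ => ?_
  exact Finset.sum_ite_eq Γ (f x) (fun _ => Λ f)

/-- For every increasing `f`, up-set `Γ` and comparable pair as in the definition of
the vectors `W^{Γ,x,y}`, the indicator vector `𝕀_f` satisfies `⟨𝕀_f, W^{Γ,x,y}⟩ ≥ 0`;
consequently every realizably monotone generator is stochastically monotone,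
i.e. `G_{r.mon} ⊆ G_{mon}`. -/
theorem stmt2 {S : Type*} [Fintype S] [DecidableEq S] [PartialOrder S] :
    (∀ f : S → S, Monotone f → ∀ Γ : Finset S, IsUpSet Γ →
      (∀ x y : S, x ≤ y → y ∉ Γ →
        0 ≤ ∑ z ∈ Γ,
          ((if f y = z then (1 : ℝ) else 0) - (if f x = z then (1 : ℝ) else 0))) ∧
      (∀ x y : S, y ≤ x → y ∈ Γ →
        0 ≤ ∑ z ∈ Γᶜ,
          ((if f y = z then (1 : ℝ) else 0) - (if f x = z then (1 : ℝ) else 0)))) ∧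
    (∀ L : S → S → ℝ, IsGenerator L → RealizablyMonotoneGen L → StochMonGen L) := by
  constructor
  · intro f hf Γ hΓ
    constructor
    · intro x y hxy _
      rw [Finset.sum_sub_distrib, sub_nonneg, indic_sum, indic_sum]
      by_cases h : f x ∈ Γ
      · rw [if_pos h, if_pos (hΓ _ h _ (hf hxy))]
      · rw [if_neg h]; split <;> norm_num
    · intro x y hyx _
      rw [Finset.sum_sub_distrib, sub_nonneg, indic_sum, indic_sum]
      by_cases h : f x ∈ Γᶜ
      · have : f y ∈ Γᶜ := by
          simp only [Finset.mem_compl] at h ⊢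
          exact fun hy => h (hΓ _ hy _ (hf hyx))
        rw [if_pos h, if_pos this]
      · rw [if_neg h]; split <;> norm_num
  · intro L _ ⟨Λ, hΛ0, hΛmon, hL⟩
    constructor
    · intro Γ hΓ x y hxy hx hy
      rw [row_sum_aux Λ L Γ x hx hL, row_sum_aux Λ L Γ y hy hL]
      refine Finset.sum_le_sum fun f _ => ?_
      by_cases hmf : Monotone f
      · by_cases h : f x ∈ Γ
        · rw [if_pos h, if_pos (hΓ _ h _ (hmf hxy))]
        · rw [if_neg h]; split
          · exact hΛ0 f
          · exact le_refl 0
      · simp [hΛmon f hmf]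
    · intro Γ hΓ x y hxy hx hy
      rw [row_sum_aux Λ L Γ x hx hL, row_sum_aux Λ L Γ y hy hL]
      refine Finset.sum_le_sum fun f _ => ?_
      by_cases hmf : Monotone f
      · by_cases h : f y ∈ Γ
        · rw [if_pos h, if_pos (hΓ _ h _ (hmf hxy))]
        · rw [if_neg h]; split
          · exact hΛ0 f
          · exact le_refl 0
      · simp [hΛmon f hmf]
end

section
/- A generator L on a finite poset S is realizably monotone if and only if there exists ε > 0 such that I + εL is a realizably monotone transition matrix. Consequently, monotonicity equivalence holds for continuous-time Markov chains on S if and only if weak monotonicity equivalence holds for discrete-time Markov chains on S. -/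
open Finset

section Aux

variable {S : Type*} [Fintype S] [DecidableEq S] [PartialOrder S]

/-- Backward direction: from a realizably monotone `I + εL` extract realizable
monotonicity of `L`. -/
lemma lemA (L : S → S → ℝ) (ε : ℝ) (hε : 0 < ε)
    (h : RealizablyMonotoneTrans
      (fun x y : S => (if x = y then (1 : ℝ) else 0) + ε * L x y)) :
    RealizablyMonotoneGen L := by
  obtain ⟨Pr, hPos, hMono, _hSum, hEq⟩ := h
  refine ⟨fun f => Pr f / ε, fun f => div_nonneg (hPos f) hε.le,
    fun f hf => by simp [hMono f hf], fun x y hxy => ?_⟩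
  have h1 := hEq x y
  simp only [if_neg hxy, zero_add] at h1
  rw [← Finset.sum_div, ← h1, mul_div_cancel_left₀ _ hε.ne']

/-- Forward direction: from realizable monotonicity of a generator `L`, construct
a small `ε ∈ (0,1]` making `I + εL` a realizably monotone transition matrix. -/
lemma lemB (L : S → S → ℝ) (hL : IsGenerator L) (h : RealizablyMonotoneGen L) :
    ∃ ε : ℝ, 0 < ε ∧ ε ≤ 1 ∧
      RealizablyMonotoneTrans
        (fun x y : S => (if x = y then (1 : ℝ) else 0) + ε * L x y) := by
  obtain ⟨Λ, hΛpos, hΛmono, hΛeq⟩ := h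
  set Λ' : (S → S) → ℝ := fun f => if f = id then 0 else Λ f with hΛ'def
  have hΛ'pos : ∀ f, 0 ≤ Λ' f := by
    intro f; simp only [hΛ'def]; split
    · exact le_refl 0
    · exact hΛpos f
  set T : ℝ := ∑ f : S → S, Λ' f with hTdef
  have hT0 : 0 ≤ T := Finset.sum_nonneg fun f _ => hΛ'pos f
  set ε : ℝ := 1 / (T + 1) with hεdef
  have hT1 : (0:ℝ) < T + 1 := by linarith
  have hε0 : 0 < ε := by positivity
  have hεT : ε * T ≤ 1 := by
    rw [hεdef, div_mul_eq_mul_div, one_mul, div_le_one hT1]; linarith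
  -- key off-diagonal identity
  have hoff : ∀ x y : S, x ≠ y →
      ∑ f ∈ Finset.univ.filter (fun f : S → S => f x = y), Λ' f = L x y := by
    intro x y hxy
    rw [hΛeq x y hxy]
    refine Finset.sum_congr rfl fun f hf => ?_
    rw [Finset.mem_filter] at hf
    simp only [hΛ'def]
    rw [if_neg]
    rintro rfl
    exact hxy hf.2
  -- fiber decomposition
  have hfib : ∀ x : S,
      ∑ f ∈ Finset.univ.filter (fun f : S → S => f x = x), Λ' f = T + L x x := by
    intro x
    have hrow := hL.2 x
    have h1 : ∑ y : S, ∑ f ∈ Finset.univ.filter (fun f : S → S => f x = y), Λ' f = T := by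
      rw [hTdef]
      exact Finset.sum_fiberwise _ (fun f => f x) Λ'
    have h2 : ∑ y ∈ Finset.univ.erase x,
        ∑ f ∈ Finset.univ.filter (fun f : S → S => f x = y), Λ' f
        = ∑ y ∈ Finset.univ.erase x, L x y := by
      refine Finset.sum_congr rfl fun y hy => ?_
      rw [Finset.mem_erase] at hy
      exact hoff x y (Ne.symm hy.1)
    have h3 := Finset.sum_erase_add Finset.univ
      (fun y => ∑ f ∈ Finset.univ.filter (fun f : S → S => f x = y), Λ' f) (Finset.mem_univ x)
    have h4 := Finset.sum_erase_add Finset.univ (fun y => L x y) (Finset.mem_univ x)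
    rw [hrow] at h4
    rw [h1] at h3
    rw [h2] at h3
    linarith
  refine ⟨ε, hε0, by rw [hεdef, div_le_one hT1]; linarith, ?_⟩
  refine ⟨fun f => ε * Λ' f + (if f = id then 1 - ε * T else 0), ?_, ?_, ?_, ?_⟩
  · intro f
    have h1 : 0 ≤ ε * Λ' f := mul_nonneg hε0.le (hΛ'pos f)
    dsimp only
    split <;> linarith
  · intro f hf
    have hfid : f ≠ id := fun h => hf (h ▸ monotone_id)
    simp only [hΛ'def, if_neg hfid, hΛmono f hf, mul_zero, add_zero]
  · rw [Finset.sum_add_distrib, ← Finset.mul_sum, ← hTdef]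
    rw [Finset.sum_ite_eq' Finset.univ (id : S → S) (fun _ => 1 - ε * T),
      if_pos (Finset.mem_univ _)]
    ring
  · intro x y
    dsimp only
    rw [Finset.sum_add_distrib, ← Finset.mul_sum]
    rw [Finset.sum_ite_eq' _ (id : S → S) (fun _ => 1 - ε * T)]
    have hmem : (id : S → S) ∈ Finset.univ.filter (fun f : S → S => f x = y) ↔ x = y := by
      simp [Finset.mem_filter]
    by_cases hxy : x = y
    · subst hxy
      rw [if_pos (hmem.2 rfl), if_pos rfl, hfib x]
      ring
    · rw [if_neg (fun h => hxy (hmem.1 h)), if_neg hxy, hoff x y hxy]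
      ring

/-- Sum of a row of `I + εL` over a finite set. -/
lemma sum_row (L : S → S → ℝ) (ε : ℝ) (Γ : Finset S) (x : S) :
    ∑ z ∈ Γ, ((if x = z then (1:ℝ) else 0) + ε * L x z)
      = (if x ∈ Γ then (1:ℝ) else 0) + ε * ∑ z ∈ Γ, L x z := by
  rw [Finset.sum_add_distrib, ← Finset.mul_sum, Finset.sum_ite_eq Γ x (fun _ => (1:ℝ))]

end Aux

/-- **Proposition 2.4.** A generator `L` is realizably monotone iff `I + εL` is a
realizably monotone transition matrix for some `ε > 0`; consequently, monotonicity
equivalence holds in continuous time iff weak monotonicity equivalence holds in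
discrete time. -/
theorem stmt5 {S : Type*} [Fintype S] [DecidableEq S] [PartialOrder S] :
    (∀ L : S → S → ℝ, IsGenerator L →
      (RealizablyMonotoneGen L ↔ ∃ ε : ℝ, 0 < ε ∧
        RealizablyMonotoneTrans
          (fun x y : S => (if x = y then (1 : ℝ) else 0) + ε * L x y))) ∧
    ((∀ L : S → S → ℝ, IsGenerator L → StochMonGen L → RealizablyMonotoneGen L) ↔
     (∀ P : S → S → ℝ, IsTransition P → StochMonTrans P →
        ∃ lam : ℝ, 0 < lam ∧ lam ≤ 1 ∧
          RealizablyMonotoneTrans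
            (fun x y : S =>
              (1 - lam) * (if x = y then (1 : ℝ) else 0) + lam * P x y))) := by
  constructor
  · intro L hL
    constructor
    · intro h
      obtain ⟨ε, hε0, _, h⟩ := lemB L hL h
      exact ⟨ε, hε0, h⟩
    · rintro ⟨ε, hε0, h⟩
      exact lemA L ε hε0 h
  · constructor
    · -- continuous ⇒ discrete
      intro hcont P hP hPmono
      set L : S → S → ℝ := fun x y => P x y - (if x = y then (1:ℝ) else 0) with hLdef
      have hLgen : IsGenerator L := by
        constructor
        · intro x y hxy
          simp only [hLdef, if_neg hxy, sub_zero]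
          exact hP.1 x y
        · intro x
          simp only [hLdef]
          rw [Finset.sum_sub_distrib, hP.2 x, Finset.sum_ite_eq Finset.univ x (fun _ => (1:ℝ)),
            if_pos (Finset.mem_univ x), sub_self]
      have hLsum : ∀ (Γ : Finset S) (x : S), x ∉ Γ → ∑ z ∈ Γ, L x z = ∑ z ∈ Γ, P x z := by
        intro Γ x hx
        simp only [hLdef]
        rw [Finset.sum_sub_distrib, Finset.sum_ite_eq Γ x (fun _ => (1:ℝ)), if_neg hx, sub_zero]
      have hLmono : StochMonGen L := by
        constructor
        · intro Γ hΓ x y hxy hx hy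
          rw [hLsum Γ x hx, hLsum Γ y hy]
          exact hPmono Γ hΓ x y hxy
        · intro Γ hΓ x y hxy hx hy
          rw [hLsum Γ x hx, hLsum Γ y hy]
          have hup : IsUpSet Γᶜ := by
            intro a ha b hab
            rw [Finset.mem_compl] at ha ⊢
            exact fun hb => ha (hΓ b hb a hab)
          have := hPmono Γᶜ hup x y hxy
          have hx' := Finset.sum_compl_add_sum Γ (P x)
          have hy' := Finset.sum_compl_add_sum Γ (P y)
          rw [hP.2 x] at hx'
          rw [hP.2 y] at hy'
          linarith
      obtain ⟨ε, hε0, hε1, hreal⟩ := lemB L hLgen (hcont L hLgen hLmono)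
      refine ⟨ε, hε0, hε1, ?_⟩
      have heq : (fun x y : S => (1 - ε) * (if x = y then (1:ℝ) else 0) + ε * P x y)
          = fun x y : S => (if x = y then (1:ℝ) else 0) + ε * L x y := by
        funext x y
        simp only [hLdef]
        ring
      rw [heq]
      exact hreal
    · -- discrete ⇒ continuous
      intro hdisc L hL hLmono
      have hdiag : ∀ x : S, L x x ≤ 0 := by
        intro x
        have h4 := Finset.sum_erase_add Finset.univ (fun y => L x y) (Finset.mem_univ x)
        rw [hL.2 x] at h4
        have : 0 ≤ ∑ y ∈ Finset.univ.erase x, L x y :=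
          Finset.sum_nonneg fun y hy => hL.1 x y (Ne.symm (Finset.mem_erase.1 hy).1)
        linarith
      set c : ℝ := ∑ x : S, (-L x x) with hcdef
      have hc0 : 0 ≤ c := Finset.sum_nonneg fun x _ => neg_nonneg.2 (hdiag x)
      have hcb : ∀ x : S, -L x x ≤ c := by
        intro x
        exact Finset.single_le_sum (f := fun x => -L x x)
          (fun y _ => neg_nonneg.2 (hdiag y)) (Finset.mem_univ x)
      set ε : ℝ := 1 / (2 * c + 1) with hεdef
      have hc1 : (0:ℝ) < 2 * c + 1 := by linarith
      have hε0 : 0 < ε := by positivity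
      have hεc : ε * c ≤ 1 / 2 := by
        rw [hεdef, div_mul_eq_mul_div, one_mul, div_le_div_iff₀ hc1 (by norm_num)]
        linarith
      set P : S → S → ℝ := fun x y => (if x = y then (1:ℝ) else 0) + ε * L x y with hPdef
      -- bounds on partial row sums of L
      have hΓout : ∀ (Γ : Finset S) (x : S), x ∉ Γ → ∑ z ∈ Γ, L x z ≤ c := by
        intro Γ x hx
        have hsub : Γ ⊆ Finset.univ.erase x := by
          intro z hz
          rw [Finset.mem_erase]
          exact ⟨fun h => hx (h ▸ hz), Finset.mem_univ z⟩
        have h1 : ∑ z ∈ Γ, L x z ≤ ∑ z ∈ Finset.univ.erase x, L x z :=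
          Finset.sum_le_sum_of_subset_of_nonneg hsub
            (fun z hz hz' => hL.1 x z (Ne.symm (Finset.mem_erase.1 hz).1))
        have h4 := Finset.sum_erase_add Finset.univ (fun y => L x y) (Finset.mem_univ x)
        rw [hL.2 x] at h4
        have := hcb x
        linarith
      have hΓin : ∀ (Γ : Finset S) (y : S), y ∈ Γ → -c ≤ ∑ z ∈ Γ, L y z := by
        intro Γ y hy
        have h4 := Finset.sum_erase_add Γ (fun z => L y z) hy
        have h5 : 0 ≤ ∑ z ∈ Γ.erase y, L y z :=
          Finset.sum_nonneg fun z hz => hL.1 y z (Ne.symm (Finset.mem_erase.1 hz).1)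
        have := hcb y
        linarith
      have hPtrans : IsTransition P := by
        constructor
        · intro x y
          by_cases hxy : x = y
          · subst hxy
            simp only [hPdef, if_pos rfl, ite_true]
            have h1 : -L x x ≤ c := hcb x
            have h2 : ε * (-L x x) ≤ ε * c := by
              apply mul_le_mul_of_nonneg_left h1 hε0.le
            nlinarith
          · simp only [hPdef, if_neg hxy, zero_add]
            exact mul_nonneg hε0.le (hL.1 x y hxy)
        · intro x
          simp only [hPdef]
          rw [Finset.sum_add_distrib, ← Finset.mul_sum, hL.2 x,
            Finset.sum_ite_eq Finset.univ x (fun _ => (1:ℝ)), if_pos (Finset.mem_univ x)]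
          ring
      have hPmono : StochMonTrans P := by
        intro Γ hΓ x y hxy
        simp only [hPdef]
        rw [sum_row, sum_row]
        by_cases hx : x ∈ Γ
        · have hy : y ∈ Γ := hΓ x hx y hxy
          rw [if_pos hx, if_pos hy]
          -- both inside: use down-set (complement) inequality
          have hdn : IsDownSet Γᶜ := by
            intro a ha b hab
            rw [Finset.mem_compl] at ha ⊢
            exact fun hb => ha (hΓ b hb a hab)
          have hxc : x ∉ Γᶜ := by rw [Finset.mem_compl]; exact fun h => h hx
          have hyc : y ∉ Γᶜ := by rw [Finset.mem_compl]; exact fun h => h hy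
          have h1 := hLmono.2 Γᶜ hdn x y hxy hxc hyc
          have hx' := Finset.sum_compl_add_sum Γ (L x)
          have hy' := Finset.sum_compl_add_sum Γ (L y)
          rw [hL.2 x] at hx'
          rw [hL.2 y] at hy'
          have h2 : ∑ z ∈ Γ, L x z ≤ ∑ z ∈ Γ, L y z := by linarith
          nlinarith
        · by_cases hy : y ∈ Γ
          · rw [if_neg hx, if_pos hy]
            have h1 : ∑ z ∈ Γ, L x z ≤ c := hΓout Γ x hx
            have h2 : -c ≤ ∑ z ∈ Γ, L y z := hΓin Γ y hy
            nlinarith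
          · rw [if_neg hx, if_neg hy]
            have h2 := hLmono.1 Γ hΓ x y hxy hx hy
            nlinarith
      obtain ⟨lam, hlam0, _, hreal⟩ := hdisc P hPtrans hPmono
      have heq : (fun x y : S =>
            (1 - lam) * (if x = y then (1:ℝ) else 0) + lam * P x y)
          = fun x y : S => (if x = y then (1:ℝ) else 0) + (lam * ε) * L x y := by
        funext x y
        simp only [hPdef]
        ring
      rw [heq] at hreal
      exact lemA L (lam * ε) (by positivity) hreal
end

section
/- If on a finite poset S every stochastically monotone discrete-time transition matrix is realizably monotone, then every stochastically monotone generator on S is realizably monotone. -/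
open Finset

/-- **Corollary 2.5.** If on the finite poset `S` every stochastically monotone
discrete-time transition matrix is realizably monotone, then every stochastically
monotone generator on `S` is realizably monotone. -/
theorem stmt6 {S : Type*} [Fintype S] [DecidableEq S] [PartialOrder S]
    (hdisc : ∀ P : S → S → ℝ, IsTransition P → StochMonTrans P →
      RealizablyMonotoneTrans P) :
    ∀ L : S → S → ℝ, IsGenerator L → StochMonGen L → RealizablyMonotoneGen L := by
  intro L hL hmon
  obtain ⟨hLoff, hLrow⟩ := hL
  set c : ℝ := ∑ z, |L z z| with hc
  have hc0 : 0 ≤ c := Finset.sum_nonneg fun z _ => abs_nonneg _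
  set ε : ℝ := 1 / (1 + c) with hεdef
  have h1c : (0:ℝ) < 1 + c := by linarith
  have hε : 0 < ε := by positivity
  have hεc : ε * (1 + c) = 1 := one_div_mul_cancel h1c.ne'
  have habs : ∀ x : S, |L x x| ≤ c := fun x =>
    Finset.single_le_sum (f := fun z => |L z z|) (fun z _ => abs_nonneg _) (Finset.mem_univ x)
  have habs2 : ∀ x y : S, x ≠ y → |L x x| + |L y y| ≤ c := by
    intro x y hxy
    calc |L x x| + |L y y| = ∑ z ∈ ({x, y} : Finset S), |L z z| := by
          rw [Finset.sum_pair hxy]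
      _ ≤ c := Finset.sum_le_sum_of_subset_of_nonneg (Finset.subset_univ _)
          (fun z _ _ => abs_nonneg _)
  set P : S → S → ℝ := fun x y => ε * L x y + (if x = y then 1 else 0) with hPdef
  have hsum : ∀ (x : S) (Γ : Finset S),
      ∑ z ∈ Γ, P x z = ε * ∑ z ∈ Γ, L x z + (if x ∈ Γ then 1 else 0) := by
    intro x Γ
    simp [hPdef, Finset.sum_add_distrib, Finset.mul_sum, Finset.sum_ite_eq]
  -- upper bound on row partial sums not containing x
  have hub : ∀ (x : S) (Γ : Finset S), x ∉ Γ → ∑ z ∈ Γ, L x z ≤ -L x x := by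
    intro x Γ hx
    have hsub : Γ ⊆ Finset.univ.erase x := by
      intro z hz
      exact Finset.mem_erase.mpr ⟨fun h => hx (h ▸ hz), Finset.mem_univ z⟩
    have h1 : ∑ z ∈ Γ, L x z ≤ ∑ z ∈ Finset.univ.erase x, L x z :=
      Finset.sum_le_sum_of_subset_of_nonneg hsub
        (fun z hzu _ => hLoff x z fun h => (Finset.mem_erase.mp hzu).1 h.symm)
    have h2 : ∑ z ∈ Finset.univ.erase x, L x z = -L x x := by
      have := Finset.add_sum_erase Finset.univ (fun z => L x z) (Finset.mem_univ x)
      have h3 := hLrow x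
      linarith
    linarith
  have hlb : ∀ (y : S) (Γ : Finset S), y ∈ Γ → L y y ≤ ∑ z ∈ Γ, L y z := by
    intro y Γ hy
    have := Finset.add_sum_erase Γ (fun z => L y z) hy
    have h4 : 0 ≤ ∑ z ∈ Γ.erase y, L y z :=
      Finset.sum_nonneg fun z hz => hLoff y z fun h =>
        (Finset.mem_erase.mp hz).1 h.symm
    linarith
  have hPtrans : IsTransition P := by
    constructor
    · intro x y
      by_cases h : x = y
      · subst h
        have h1 : -L x x ≤ |L x x| := neg_le_abs _
        have h2 : ε * |L x x| ≤ ε * (1 + c) := by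
          apply mul_le_mul_of_nonneg_left _ hε.le
          linarith [habs x]
        simp only [hPdef, if_pos rfl, if_true]
        nlinarith
      · simp only [hPdef, if_neg h]
        have := hLoff x y h
        positivity
    · intro x
      rw [hsum x Finset.univ, hLrow x]
      simp
  have hPmon : StochMonTrans P := by
    intro Γ hΓ x y hxy
    rcases eq_or_ne x y with rfl | hne
    · exact le_rfl
    rw [hsum, hsum]
    by_cases hx : x ∈ Γ
    · have hy : y ∈ Γ := hΓ x hx y hxy
      rw [if_pos hx, if_pos hy]
      -- complement argument
      have hdown : IsDownSet (Finset.univ \ Γ) := by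
        intro a ha b hba
        simp only [Finset.mem_sdiff, Finset.mem_univ, true_and] at ha ⊢
        intro hb
        exact ha (hΓ b hb a hba)
      have hxc : x ∉ Finset.univ \ Γ := by simp [hx]
      have hyc : y ∉ Finset.univ \ Γ := by simp [hy]
      have hkey := hmon.2 (Finset.univ \ Γ) hdown x y hxy hxc hyc
      have hxsplit : ∑ z ∈ Finset.univ \ Γ, L x z + ∑ z ∈ Γ, L x z = 0 := by
        rw [Finset.sum_sdiff (Finset.subset_univ Γ)]; exact hLrow x
      have hysplit : ∑ z ∈ Finset.univ \ Γ, L y z + ∑ z ∈ Γ, L y z = 0 := by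
        rw [Finset.sum_sdiff (Finset.subset_univ Γ)]; exact hLrow y
      have : ∑ z ∈ Γ, L x z ≤ ∑ z ∈ Γ, L y z := by linarith
      nlinarith
    · by_cases hy : y ∈ Γ
      · rw [if_neg hx, if_pos hy]
        have h1 : ∑ z ∈ Γ, L x z ≤ -L x x := hub x Γ hx
        have h2 : L y y ≤ ∑ z ∈ Γ, L y z := hlb y Γ hy
        have h3 : |L x x| + |L y y| ≤ c := habs2 x y hne
        have h4 : -L x x ≤ |L x x| := neg_le_abs _
        have h5 : -L y y ≤ |L y y| := neg_le_abs _
        have h6 : ε * (|L x x| + |L y y|) ≤ ε * (1 + c) := by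
          apply mul_le_mul_of_nonneg_left _ hε.le; linarith
        nlinarith
      · rw [if_neg hx, if_neg hy]
        have := hmon.1 Γ hΓ x y hxy hx hy
        nlinarith
  obtain ⟨Pr, hPr0, hPrmon, _, hPrP⟩ := hdisc P hPtrans hPmon
  refine ⟨fun f => (1 / ε) * Pr f,
    fun f => mul_nonneg (by positivity) (hPr0 f),
    fun f hf => by simp only [hPrmon f hf, mul_zero], ?_⟩
  intro x y hxy
  have hPxy : P x y = ε * L x y := by simp [hPdef, if_neg hxy]
  have := hPrP x y
  rw [hPxy] at this
  rw [← Finset.mul_sum, ← this]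
  field_simp
end

section
/- On the 5-point poset S₁ with elements {w,a,b,c,d} and cover relations w < a, w < b, w < c, a < b, a < c, b < d, c < d, the generator L with L_{d,c}=L_{d,b}=L_{b,w}=L_{c,w}=L_{a,w}=1 and all other off-diagonal rates zero is stochastically monotone but not realizably monotone. -/
open Finset

/-- **Example 1.** On the 5-point poset `S₁` (`w` below everything; `a < b, c, d`;
`b < d`; `c < d`), the generator with `L d c = L d b = L b w = L c w = L a w = 1`
and all other off-diagonal rates zero is stochastically monotone but not realizably
monotone. -/
theorem stmt7 {S : Type*} [Fintype S] [DecidableEq S] [PartialOrder S]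
    (w a b c d : S)
    (huniv : (Finset.univ : Finset S) = {w, a, b, c, d})
    (hcard : ({w, a, b, c, d} : Finset S).card = 5)
    (hle : ∀ x y : S, x ≤ y ↔ (x = y ∨ x = w ∨
      (x = a ∧ (y = b ∨ y = c ∨ y = d)) ∨ (x = b ∧ y = d) ∨ (x = c ∧ y = d)))
    (L : S → S → ℝ) (hL : IsGenerator L)
    (h1 : L d c = 1) (h2 : L d b = 1) (h3 : L b w = 1) (h4 : L c w = 1)
    (h5 : L a w = 1)
    (h0 : ∀ x y : S, x ≠ y → L x y ≠ 0 →
      ((x, y) = (d, c) ∨ (x, y) = (d, b) ∨ (x, y) = (b, w) ∨ (x, y) = (c, w) ∨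
        (x, y) = (a, w))) :
    StochMonGen L ∧ ¬ RealizablyMonotoneGen L := by
  
  classical
  -- pairwise distinctness from the cardinality hypothesis
  have h4' : ∀ x y z u : S, ({x,y,z,u} : Finset S).card ≤ 4 := by
    intro x y z u
    have k1 := Finset.card_insert_le x ({y,z,u} : Finset S)
    have k2 := Finset.card_insert_le y ({z,u} : Finset S)
    have k3 := Finset.card_insert_le z ({u} : Finset S)
    simp only [Finset.card_singleton] at *
    omega
  have key : ∀ (x y z u : S), ({w,a,b,c,d} : Finset S) ⊆ {x,y,z,u} → False := by
    intro x y z u hsub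
    have k1 := Finset.card_le_card hsub
    have k2 := h4' x y z u
    omega
  have hwa : w ≠ a := fun h => key a b c d (by subst h; intro z hz; simp at hz ⊢; tauto)
  have hwb : w ≠ b := fun h => key a b c d (by subst h; intro z hz; simp at hz ⊢; tauto)
  have hwc : w ≠ c := fun h => key a b c d (by subst h; intro z hz; simp at hz ⊢; tauto)
  have hwd : w ≠ d := fun h => key a b c d (by subst h; intro z hz; simp at hz ⊢; tauto)
  have hab : a ≠ b := fun h => key w b c d (by subst h; intro z hz; simp at hz ⊢; tauto)
  have hac : a ≠ c := fun h => key w b c d (by subst h; intro z hz; simp at hz ⊢; tauto)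
  have had : a ≠ d := fun h => key w b c d (by subst h; intro z hz; simp at hz ⊢; tauto)
  have hbc : b ≠ c := fun h => key w a c d (by subst h; intro z hz; simp at hz ⊢; tauto)
  have hbd : b ≠ d := fun h => key w a c d (by subst h; intro z hz; simp at hz ⊢; tauto)
  have hcd : c ≠ d := fun h => key w a b d (by subst h; intro z hz; simp at hz ⊢; tauto)
  have hmem : ∀ z : S, z = w ∨ z = a ∨ z = b ∨ z = c ∨ z = d := by
    intro z
    have hz : z ∈ (Finset.univ : Finset S) := Finset.mem_univ z
    rw [huniv] at hz
    simpa using hz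
  -- order facts
  have hwle : ∀ z : S, w ≤ z := fun z => (hle w z).mpr (Or.inr (Or.inl rfl))
  have hab' : a ≤ b := (hle a b).mpr (Or.inr (Or.inr (Or.inl ⟨rfl, Or.inl rfl⟩)))
  have hac' : a ≤ c := (hle a c).mpr (Or.inr (Or.inr (Or.inl ⟨rfl, Or.inr (Or.inl rfl)⟩)))
  have hbd' : b ≤ d := (hle b d).mpr (Or.inr (Or.inr (Or.inr (Or.inl ⟨rfl, rfl⟩))))
  have hcd' : c ≤ d := (hle c d).mpr (Or.inr (Or.inr (Or.inr (Or.inr ⟨rfl, rfl⟩))))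
  have hlew : ∀ x : S, x ≤ w → x = w := by
    intro x h
    rcases (hle x w).mp h with h | h | ⟨h1, h2⟩ | ⟨h1, h2⟩ | ⟨h1, h2⟩
    · exact h
    · exact h
    · rcases h2 with h2 | h2 | h2
      · exact absurd h2 hwb
      · exact absurd h2 hwc
      · exact absurd h2 hwd
    · exact absurd h2 hwd
    · exact absurd h2 hwd
  have hnbc : ¬ b ≤ c := by
    intro h
    rcases (hle b c).mp h with h | h | ⟨h1, -⟩ | ⟨-, h2⟩ | ⟨h1, -⟩
    · exact hbc h
    · exact hwb h.symm
    · exact hab h1.symm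
    · exact hcd h2
    · exact hbc h1
  have hncb : ¬ c ≤ b := by
    intro h
    rcases (hle c b).mp h with h | h | ⟨h1, -⟩ | ⟨h1, -⟩ | ⟨-, h2⟩
    · exact hbc h.symm
    · exact hwc h.symm
    · exact hac h1.symm
    · exact hbc h1.symm
    · exact hbd h2
  -- the generic vanishing lemma
  have hLz : ∀ x y : S, x ≠ y → ¬(x = d ∧ y = c) → ¬(x = d ∧ y = b) → ¬(x = b ∧ y = w) →
      ¬(x = c ∧ y = w) → ¬(x = a ∧ y = w) → L x y = 0 := by
    intro x y hxy p2 p3 p4 p5 p6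
    by_contra hne
    rcases h0 x y hxy hne with h | h | h | h | h <;> rw [Prod.mk.injEq] at h
    exacts [p2 h, p3 h, p4 h, p5 h, p6 h]
  have zdw : L d w = 0 := hLz d w (fun h => hwd h.symm) (fun h => hwc h.2) (fun h => hwb h.2)
    (fun h => hbd h.1.symm) (fun h => hcd h.1.symm) (fun h => had h.1.symm)
  have zda : L d a = 0 := hLz d a (fun h => had h.symm) (fun h => hac h.2) (fun h => hab h.2)
    (fun h => hbd h.1.symm) (fun h => hcd h.1.symm) (fun h => hwa h.2.symm)
  have zab : L a b = 0 := hLz a b hab (fun h => had h.1) (fun h => had h.1)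
    (fun h => hab h.1) (fun h => hac h.1) (fun h => hwb h.2.symm)
  have zac : L a c = 0 := hLz a c hac (fun h => had h.1) (fun h => had h.1)
    (fun h => hab h.1) (fun h => hac h.1) (fun h => hwc h.2.symm)
  have zad : L a d = 0 := hLz a d had (fun h => had h.1) (fun h => had h.1)
    (fun h => hab h.1) (fun h => hac h.1) (fun h => hwd h.2.symm)
  have zba : L b a = 0 := hLz b a (fun h => hab h.symm) (fun h => hbd h.1) (fun h => hbd h.1)
    (fun h => hwa h.2.symm) (fun h => hbc h.1) (fun h => hab h.1.symm)
  have zbc : L b c = 0 := hLz b c hbc (fun h => hbd h.1) (fun h => hbd h.1)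
    (fun h => hwc h.2.symm) (fun h => hbc h.1) (fun h => hab h.1.symm)
  have zbd : L b d = 0 := hLz b d hbd (fun h => hbd h.1) (fun h => hbd h.1)
    (fun h => hwd h.2.symm) (fun h => hbc h.1) (fun h => hab h.1.symm)
  have zca : L c a = 0 := hLz c a (fun h => hac h.symm) (fun h => hcd h.1) (fun h => hcd h.1)
    (fun h => hbc h.1.symm) (fun h => hwa h.2.symm) (fun h => hac h.1.symm)
  have zcb : L c b = 0 := hLz c b (fun h => hbc h.symm) (fun h => hcd h.1) (fun h => hcd h.1)
    (fun h => hbc h.1.symm) (fun h => hwb h.2.symm) (fun h => hac h.1.symm)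
  have zcd : L c d = 0 := hLz c d hcd (fun h => hcd h.1) (fun h => hcd h.1)
    (fun h => hbc h.1.symm) (fun h => hwd h.2.symm) (fun h => hac h.1.symm)
  -- row sum lemmas
  have rowA : ∀ Γ : Finset S, a ∉ Γ → ∑ z ∈ Γ, L a z = if w ∈ Γ then 1 else 0 := by
    intro Γ ha
    have : ∑ z ∈ Γ, L a z = ∑ z ∈ Γ, (if z = w then (1:ℝ) else 0) := by
      apply Finset.sum_congr rfl
      intro z hz
      rcases hmem z with rfl | rfl | rfl | rfl | rfl
      · rw [if_pos rfl]; exact h5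
      · exact absurd hz ha
      · rw [if_neg (fun h => hwb h.symm)]; exact zab
      · rw [if_neg (fun h => hwc h.symm)]; exact zac
      · rw [if_neg (fun h => hwd h.symm)]; exact zad
    rw [this, Finset.sum_ite_eq' Γ w (fun _ => (1:ℝ))]
  have rowB : ∀ Γ : Finset S, b ∉ Γ → ∑ z ∈ Γ, L b z = if w ∈ Γ then 1 else 0 := by
    intro Γ hb
    have : ∑ z ∈ Γ, L b z = ∑ z ∈ Γ, (if z = w then (1:ℝ) else 0) := by
      apply Finset.sum_congr rfl
      intro z hz
      rcases hmem z with rfl | rfl | rfl | rfl | rfl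
      · rw [if_pos rfl]; exact h3
      · rw [if_neg (fun h => hwa h.symm)]; exact zba
      · exact absurd hz hb
      · rw [if_neg (fun h => hwc h.symm)]; exact zbc
      · rw [if_neg (fun h => hwd h.symm)]; exact zbd
    rw [this, Finset.sum_ite_eq' Γ w (fun _ => (1:ℝ))]
  have rowC : ∀ Γ : Finset S, c ∉ Γ → ∑ z ∈ Γ, L c z = if w ∈ Γ then 1 else 0 := by
    intro Γ hc
    have : ∑ z ∈ Γ, L c z = ∑ z ∈ Γ, (if z = w then (1:ℝ) else 0) := by
      apply Finset.sum_congr rfl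
      intro z hz
      rcases hmem z with rfl | rfl | rfl | rfl | rfl
      · rw [if_pos rfl]; exact h4
      · rw [if_neg (fun h => hwa h.symm)]; exact zca
      · rw [if_neg (fun h => hwb h.symm)]; exact zcb
      · exact absurd hz hc
      · rw [if_neg (fun h => hwd h.symm)]; exact zcd
    rw [this, Finset.sum_ite_eq' Γ w (fun _ => (1:ℝ))]
  have rowD : ∀ Γ : Finset S, d ∉ Γ →
      ∑ z ∈ Γ, L d z = (if b ∈ Γ then 1 else 0) + (if c ∈ Γ then 1 else 0) := by
    intro Γ hd
    have : ∑ z ∈ Γ, L d z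
        = ∑ z ∈ Γ, ((if z = b then (1:ℝ) else 0) + (if z = c then (1:ℝ) else 0)) := by
      apply Finset.sum_congr rfl
      intro z hz
      rcases hmem z with rfl | rfl | rfl | rfl | rfl
      · rw [if_neg hwb, if_neg hwc]; rw [zdw]; ring
      · rw [if_neg hab, if_neg hac]; rw [zda]; ring
      · rw [if_pos rfl, if_neg hbc]; rw [h2]; ring
      · rw [if_neg (fun h => hbc h.symm), if_pos rfl]; rw [h1]; ring
      · exact absurd hz hd
    rw [this, Finset.sum_add_distrib, Finset.sum_ite_eq' Γ b (fun _ => (1:ℝ)),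
      Finset.sum_ite_eq' Γ c (fun _ => (1:ℝ))]
  constructor
  · constructor
    · -- up-set condition
      intro Γ hΓ x y hxy hxΓ hyΓ
      have hx0 : ∑ z ∈ Γ, L x z = 0 := by
        apply Finset.sum_eq_zero
        intro z hz
        by_contra hc
        have hzx : x ≠ z := fun h => hxΓ (h ▸ hz)
        rcases h0 x z hzx hc with h | h | h | h | h <;> rw [Prod.mk.injEq] at h <;>
          obtain ⟨rfl, rfl⟩ := h
        · exact hxΓ (hΓ _ hz _ hcd')
        · exact hxΓ (hΓ _ hz _ hbd')
        · exact hxΓ (hΓ _ hz _ (hwle _))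
        · exact hxΓ (hΓ _ hz _ (hwle _))
        · exact hxΓ (hΓ _ hz _ (hwle _))
      rw [hx0]
      exact Finset.sum_nonneg fun z hz => hL.1 y z (fun h => hyΓ (h ▸ hz))
    · -- down-set condition
      intro Γ hΓ x y hxy hxΓ hyΓ
      rcases (hle x y).mp hxy with rfl | rfl | ⟨rfl, hy⟩ | ⟨rfl, rfl⟩ | ⟨rfl, rfl⟩
      · exact le_refl _
      · have hΓe : Γ = ∅ := by
          apply Finset.eq_empty_of_forall_notMem
          intro z hz
          exact hxΓ (hΓ z hz x (hwle z))
        subst hΓe; simp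
      · rcases hy with rfl | rfl | rfl
        · rw [rowB Γ hyΓ, rowA Γ hxΓ]
        · rw [rowC Γ hyΓ, rowA Γ hxΓ]
        · rw [rowD Γ hyΓ, rowA Γ hxΓ]
          have hb : b ∉ Γ := fun h => hxΓ (hΓ b h x hab')
          have hc : c ∉ Γ := fun h => hxΓ (hΓ c h x hac')
          rw [if_neg hb, if_neg hc]
          split_ifs <;> norm_num
      · rw [rowD Γ hyΓ, rowB Γ hxΓ, if_neg hxΓ]
        by_cases hc : c ∈ Γ
        · rw [if_pos hc, if_pos (hΓ c hc w (hwle c))]; norm_num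
        · rw [if_neg hc]; split_ifs <;> norm_num
      · rw [rowD Γ hyΓ, rowC Γ hxΓ, if_neg hxΓ]
        by_cases hb : b ∈ Γ
        · rw [if_pos hb, if_pos (hΓ b hb w (hwle b))]; norm_num
        · rw [if_neg hb]; split_ifs <;> norm_num
  · -- not realizably monotone
    rintro ⟨Λ, hΛ0, hΛm, hΛ⟩
    have hmono : ∀ f : S → S, Λ f ≠ 0 → Monotone f := by
      intro f hf
      by_contra hm
      exact hf (hΛm f hm)
    have hpos : ∀ (f : S → S) (x : S), Λ f ≠ 0 → x ≠ f x → 0 < L x (f x) := by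
      intro f x hf hxy
      rw [hΛ x (f x) hxy]
      refine lt_of_lt_of_le (lt_of_le_of_ne (hΛ0 f) (Ne.symm hf)) ?_
      refine Finset.single_le_sum (fun g _ => hΛ0 g) ?_
      simp
    have htar : ∀ f : S → S, Λ f ≠ 0 → ∀ x : S, f x = x ∨ ((x = d ∧ f x = c) ∨
        (x = d ∧ f x = b) ∨ (x = b ∧ f x = w) ∨ (x = c ∧ f x = w) ∨ (x = a ∧ f x = w)) := by
      intro f hf x
      by_cases hfx : f x = x
      · exact Or.inl hfx
      · right
        have hne : x ≠ f x := fun h => hfx h.symm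
        have hLne : L x (f x) ≠ 0 := ne_of_gt (hpos f x hf hne)
        rcases h0 x (f x) hne hLne with h | h | h | h | h <;> rw [Prod.mk.injEq] at h
        exacts [Or.inl h, Or.inr (Or.inl h), Or.inr (Or.inr (Or.inl h)),
          Or.inr (Or.inr (Or.inr (Or.inl h))), Or.inr (Or.inr (Or.inr (Or.inr h)))]
    have hkey : ∀ f : S → S, Λ f ≠ 0 → (f d = c ∨ f d = b) → f a = w := by
      intro f hf hfd
      have hm := hmono f hf
      rcases hfd with hdc | hdb
      · have hfb : f b = w := by
          have h1' : f b ≤ c := hdc ▸ hm hbd'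
          rcases htar f hf b with h | (⟨h, -⟩ | ⟨h, -⟩ | ⟨-, h⟩ | ⟨h, -⟩ | ⟨h, -⟩)
          · exact absurd (h ▸ h1') hnbc
          · exact absurd h hbd
          · exact absurd h hbd
          · exact h
          · exact absurd h hbc
          · exact absurd h.symm hab
        have h2' : f a ≤ w := hfb ▸ hm hab'
        exact hlew _ h2'
      · have hfc : f c = w := by
          have h1' : f c ≤ b := hdb ▸ hm hcd'
          rcases htar f hf c with h | (⟨h, -⟩ | ⟨h, -⟩ | ⟨h, -⟩ | ⟨-, h⟩ | ⟨h, -⟩)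
          · exact absurd (h ▸ h1') hncb
          · exact absurd h hcd
          · exact absurd h hcd
          · exact absurd h.symm hbc
          · exact h
          · exact absurd h.symm hac
        have h2' : f a ≤ w := hfc ▸ hm hac'
        exact hlew _ h2'
    set C := Finset.univ.filter (fun f : S → S => f d = c) with hC
    set B := Finset.univ.filter (fun f : S → S => f d = b) with hB
    set V := Finset.univ.filter (fun f : S → S => f a = w) with hV
    have hsC : ∑ f ∈ C, Λ f = 1 := by rw [← hΛ d c (fun h => hcd h.symm)]; exact h1
    have hsB : ∑ f ∈ B, Λ f = 1 := by rw [← hΛ d b (fun h => hbd h.symm)]; exact h2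
    have hsV : ∑ f ∈ V, Λ f = 1 := by rw [← hΛ a w (fun h => hwa h.symm)]; exact h5
    have hdisj : Disjoint C B := by
      rw [Finset.disjoint_left]
      intro f hfC hfB
      rw [hC, Finset.mem_filter] at hfC
      rw [hB, Finset.mem_filter] at hfB
      exact hbc (hfB.2.symm.trans hfC.2)
    have hsub : (C ∪ B).filter (fun f => Λ f ≠ 0) ⊆ V := by
      intro f hf
      rw [Finset.mem_filter] at hf
      obtain ⟨hfu, hfne⟩ := hf
      rw [Finset.mem_union] at hfu
      rw [hV, Finset.mem_filter]
      refine ⟨Finset.mem_univ f, hkey f hfne ?_⟩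
      rcases hfu with h | h
      · rw [hC, Finset.mem_filter] at h; exact Or.inl h.2
      · rw [hB, Finset.mem_filter] at h; exact Or.inr h.2
    have e1 : ∑ f ∈ (C ∪ B), Λ f = 2 := by
      rw [Finset.sum_union hdisj, hsC, hsB]; norm_num
    have e2 : ∑ f ∈ (C ∪ B).filter (fun f => Λ f ≠ 0), Λ f = ∑ f ∈ (C ∪ B), Λ f :=
      Finset.sum_filter_ne_zero _
    have e3 : ∑ f ∈ (C ∪ B).filter (fun f => Λ f ≠ 0), Λ f ≤ ∑ f ∈ V, Λ f :=
      Finset.sum_le_sum_of_subset_of_nonneg hsub (fun f _ _ => hΛ0 f)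
    rw [e2, e1, hsV] at e3
    norm_num at e3
end

section
/- Let S be the poset {a₁,…,aₙ,b₁,…,b_m} with aᵢ < b_j for all i,j (a complete bipartite order). Then every stochastically monotone generator on S is realizably monotone. -/
open Finset

section Construction

variable {S : Type*} [Fintype S] [DecidableEq S] {n m : ℕ}

/-- Sorting permutation for the up-flows into `b k`. -/
noncomputable def sUp (a : Fin n → S) (b : Fin m → S) (L : S → S → ℝ) (k : Fin m) :
    Equiv.Perm (Fin n) := Tuple.sort (fun i => L (a i) (b k))

/-- Sorting permutation for the down-flows into `a r`. -/
noncomputable def sDown (a : Fin n → S) (b : Fin m → S) (L : S → S → ℝ) (r : Fin n) :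
    Equiv.Perm (Fin m) := Tuple.sort (fun j => L (b j) (a r))

/-- Cumulative sorted values for up-flows. -/
noncomputable def VUp (a : Fin n → S) (b : Fin m → S) (L : S → S → ℝ) (k : Fin m) (s : ℕ) : ℝ :=
  if h : 0 < s ∧ s ≤ n then L (a (sUp a b L k ⟨s - 1, by omega⟩)) (b k) else 0

/-- Cumulative sorted values for down-flows. -/
noncomputable def VDown (a : Fin n → S) (b : Fin m → S) (L : S → S → ℝ) (r : Fin n) (s : ℕ) : ℝ :=
  if h : 0 < s ∧ s ≤ m then L (b (sDown a b L r ⟨s - 1, by omega⟩)) (a r) else 0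

open scoped Classical in
/-- Up-family maps: everything in `B` goes to `b k`, a top slice of `A` goes to `b k`. -/
noncomputable def fUp (a : Fin n → S) (b : Fin m → S) (L : S → S → ℝ) (k : Fin m) (t : Fin n) :
    S → S := fun x =>
  if (∃ j, x = b j) ∨ (∃ i, x = a i ∧ (t : ℕ) ≤ (((sUp a b L k).symm i : Fin n) : ℕ)) then b k
  else x

open scoped Classical in
/-- Down-family maps: everything in `A` goes to `a r`, a top slice of `B` goes to `a r`. -/
noncomputable def fDown (a : Fin n → S) (b : Fin m → S) (L : S → S → ℝ) (r : Fin n) (t : Fin m) :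
    S → S := fun x =>
  if (∃ i, x = a i) then a r
  else if (∃ j, x = b j ∧ (t : ℕ) ≤ (((sDown a b L r).symm j : Fin m) : ℕ)) then a r else x

/-- The index type of the family of monotone maps used in the construction. -/
abbrev BipIdx (n m : ℕ) :=
  (Fin m × Fin n) ⊕ ((Fin n × Fin m) ⊕ ((Fin n × Fin n) ⊕ (Fin m × Fin m)))

/-- The weights. -/
noncomputable def wIdx (a : Fin n → S) (b : Fin m → S) (L : S → S → ℝ) : BipIdx n m → ℝ
  | .inl (k, t) => VUp a b L k ((t : ℕ) + 1) - VUp a b L k (t : ℕ)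
  | .inr (.inl (r, t)) => VDown a b L r ((t : ℕ) + 1) - VDown a b L r (t : ℕ)
  | .inr (.inr (.inl (i, r))) => if i = r then 0 else L (a i) (a r) - VDown a b L r m
  | .inr (.inr (.inr (j, k))) => if j = k then 0 else L (b j) (b k) - VUp a b L k n

/-- The maps. -/
noncomputable def gIdx (a : Fin n → S) (b : Fin m → S) (L : S → S → ℝ) : BipIdx n m → S → S
  | .inl (k, t) => fUp a b L k t
  | .inr (.inl (r, t)) => fDown a b L r t
  | .inr (.inr (.inl (i, r))) => fun x => if x = a i then a r else x
  | .inr (.inr (.inr (j, k))) => fun x => if x = b j then b k else x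

end Construction

/-- **Remark 3.3.** On the complete bipartite poset
`S = {a₁,…,aₙ, b₁,…,b_m}` with `aᵢ < b_j` for all `i, j` and no other strict
relations, every stochastically monotone generator is realizably monotone. -/
theorem stmt10 {S : Type*} [Fintype S] [DecidableEq S] [PartialOrder S] {n m : ℕ}
    (a : Fin n → S) (b : Fin m → S)
    (hinja : Function.Injective a) (hinjb : Function.Injective b)
    (hdisj : ∀ i j, a i ≠ b j)
    (huniv : ∀ x : S, (∃ i, x = a i) ∨ (∃ j, x = b j))
    (hle : ∀ x y : S, x ≤ y ↔ (x = y ∨ ∃ i j, x = a i ∧ y = b j))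
    (L : S → S → ℝ) (hL : IsGenerator L) (hmon : StochMonGen L) :
    RealizablyMonotoneGen L := by
  classical
  obtain ⟨hnn, hrow⟩ := hL
  have hab : ∀ i j, a i ≤ b j := fun i j => (hle _ _).2 (Or.inr ⟨i, j, rfl, rfl⟩)
  have hba : ∀ j i, b j ≠ a i := fun j i h => hdisj i j h.symm
  have keyUp : ∀ (i : Fin n) (j k : Fin m), j ≠ k → L (a i) (b k) ≤ L (b j) (b k) := by
    intro i j k hjk
    have hG : IsUpSet ({b k} : Finset S) := by
      intro x hx y hxy
      rw [Finset.mem_singleton] at hx ⊢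
      subst hx
      rcases (hle _ _).1 hxy with h | ⟨i', j', h1, h2⟩
      · exact h.symm
      · exact absurd h1.symm (hdisj i' k)
    have h := hmon.1 _ hG (a i) (b j) (hab i j)
      (by simpa using hdisj i k)
      (by simpa using fun h : b j = b k => hjk (hinjb h))
    simpa using h
  have keyDown : ∀ (j : Fin m) (i r : Fin n), i ≠ r → L (b j) (a r) ≤ L (a i) (a r) := by
    intro j i r hir
    have hG : IsDownSet ({a r} : Finset S) := by
      intro x hx y hxy
      rw [Finset.mem_singleton] at hx ⊢
      subst hx
      rcases (hle _ _).1 hxy with h | ⟨i', j', h1, h2⟩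
      · exact h
      · exact absurd h2 (hdisj r j')
    have h := hmon.2 _ hG (a i) (b j) (hab i j)
      (by simpa using fun h : a i = a r => hir (hinja h))
      (by simpa using hba j r)
    simpa using h
  have VUp_zero : ∀ k, VUp a b L k 0 = 0 := fun k => by simp [VUp]
  have VDown_zero : ∀ r, VDown a b L r 0 = 0 := fun r => by simp [VDown]
  have VUp_succ : ∀ (k : Fin m) (s : ℕ) (hs : s < n),
      VUp a b L k (s + 1) = L (a (sUp a b L k ⟨s, hs⟩)) (b k) := by
    intro k s hs
    rw [VUp, dif_pos ⟨Nat.succ_pos _, hs⟩]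
    rfl
  have VDown_succ : ∀ (r : Fin n) (s : ℕ) (hs : s < m),
      VDown a b L r (s + 1) = L (b (sDown a b L r ⟨s, hs⟩)) (a r) := by
    intro r s hs
    rw [VDown, dif_pos ⟨Nat.succ_pos _, hs⟩]
    rfl
  have wUp_nonneg : ∀ (k : Fin m) (t : Fin n),
      0 ≤ VUp a b L k ((t : ℕ) + 1) - VUp a b L k (t : ℕ) := by
    intro k t
    rw [sub_nonneg, VUp_succ k (t : ℕ) t.isLt]
    rcases Nat.eq_zero_or_pos (t : ℕ) with h0 | hpos
    · have h1 : VUp a b L k (t : ℕ) = 0 := by rw [h0]; exact VUp_zero k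
      rw [h1]
      exact hnn _ _ (hdisj _ k)
    · rw [VUp, dif_pos ⟨hpos, le_of_lt t.isLt⟩]
      exact Tuple.monotone_sort (fun i => L (a i) (b k))
        (show (⟨(t : ℕ) - 1, by omega⟩ : Fin n) ≤ ⟨(t : ℕ), t.isLt⟩ from by
          simp [Fin.le_def])
  have wDown_nonneg : ∀ (r : Fin n) (t : Fin m),
      0 ≤ VDown a b L r ((t : ℕ) + 1) - VDown a b L r (t : ℕ) := by
    intro r t
    rw [sub_nonneg, VDown_succ r (t : ℕ) t.isLt]
    rcases Nat.eq_zero_or_pos (t : ℕ) with h0 | hpos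
    · have h1 : VDown a b L r (t : ℕ) = 0 := by rw [h0]; exact VDown_zero r
      rw [h1]
      exact hnn _ _ (hba _ r)
    · rw [VDown, dif_pos ⟨hpos, le_of_lt t.isLt⟩]
      exact Tuple.monotone_sort (fun j => L (b j) (a r))
        (show (⟨(t : ℕ) - 1, by omega⟩ : Fin m) ≤ ⟨(t : ℕ), t.isLt⟩ from by
          simp [Fin.le_def])
  have VUp_top : ∀ (k j : Fin m), j ≠ k → VUp a b L k n ≤ L (b j) (b k) := by
    intro k j hjk
    rcases Nat.eq_zero_or_pos n with h0 | hpos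
    · rw [VUp, dif_neg (by omega)]
      exact hnn _ _ fun h => hjk (hinjb h)
    · rw [VUp, dif_pos ⟨hpos, le_refl n⟩]
      exact keyUp _ _ _ hjk
  have VDown_top : ∀ (r i : Fin n), i ≠ r → VDown a b L r m ≤ L (a i) (a r) := by
    intro r i hir
    rcases Nat.eq_zero_or_pos m with h0 | hpos
    · rw [VDown, dif_neg (by omega)]
      exact hnn _ _ fun h => hir (hinja h)
    · rw [VDown, dif_pos ⟨hpos, le_refl m⟩]
      exact keyDown _ _ _ hir
  have fUp_a : ∀ (k : Fin m) (t : Fin n) (i : Fin n),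
      fUp a b L k t (a i) =
        if (t : ℕ) ≤ (((sUp a b L k).symm i : Fin n) : ℕ) then b k else a i := by
    intro k t i
    simp only [fUp]
    by_cases h : (t : ℕ) ≤ (((sUp a b L k).symm i : Fin n) : ℕ)
    · rw [if_pos (Or.inr ⟨i, rfl, h⟩), if_pos h]
    · have hC : ¬((∃ j, (a i) = b j) ∨
          ∃ i', (a i) = a i' ∧ (t : ℕ) ≤ (((sUp a b L k).symm i' : Fin n) : ℕ)) := by
        rintro (⟨j, hj⟩ | ⟨i', hi', ht⟩)
        · exact hdisj i j hj
        · obtain rfl := hinja hi'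
          exact h ht
      rw [if_neg hC, if_neg h]
  have fUp_b : ∀ (k : Fin m) (t : Fin n) (j : Fin m), fUp a b L k t (b j) = b k := by
    intro k t j
    simp only [fUp]
    rw [if_pos (Or.inl ⟨j, rfl⟩)]
  have fDown_a : ∀ (r : Fin n) (t : Fin m) (i : Fin n), fDown a b L r t (a i) = a r := by
    intro r t i
    simp only [fDown]
    rw [if_pos ⟨i, rfl⟩]
  have fDown_b : ∀ (r : Fin n) (t : Fin m) (j : Fin m),
      fDown a b L r t (b j) =
        if (t : ℕ) ≤ (((sDown a b L r).symm j : Fin m) : ℕ) then a r else b j := by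
    intro r t j
    simp only [fDown]
    rw [if_neg (show ¬(∃ i, (b j : S) = a i) from by rintro ⟨i, hi⟩; exact hba j i hi)]
    by_cases h : (t : ℕ) ≤ (((sDown a b L r).symm j : Fin m) : ℕ)
    · rw [if_pos ⟨j, rfl, h⟩, if_pos h]
    · have hC : ¬(∃ j', (b j) = b j' ∧ (t : ℕ) ≤ (((sDown a b L r).symm j' : Fin m) : ℕ)) := by
        rintro ⟨j', hj', ht⟩
        obtain rfl := hinjb hj'
        exact h ht
      rw [if_neg hC, if_neg h]
  have monog : ∀ idx : BipIdx n m, Monotone (gIdx a b L idx) := by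
    intro idx x y hxy
    rcases (hle x y).1 hxy with rfl | ⟨i', j', rfl, rfl⟩
    · exact le_refl _
    rcases idx with ⟨k, t⟩ | ⟨r, t⟩ | ⟨i, r⟩ | ⟨j, k⟩
    · show fUp a b L k t (a i') ≤ fUp a b L k t (b j')
      rw [fUp_a, fUp_b]
      split_ifs
      · exact le_refl _
      · exact hab i' k
    · show fDown a b L r t (a i') ≤ fDown a b L r t (b j')
      rw [fDown_a, fDown_b]
      split_ifs
      · exact le_refl _
      · exact hab r j'
    · show (if a i' = a i then a r else a i') ≤ (if b j' = a i then a r else b j')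
      rw [if_neg (hba j' i)]
      split_ifs
      · exact hab r j'
      · exact hab i' j'
    · show (if a i' = b j then b k else a i') ≤ (if b j' = b j then b k else b j')
      rw [if_neg (hdisj i' j)]
      split_ifs
      · exact hab i' k
      · exact hab i' j'
  have sum_fin_ite : ∀ (N : ℕ) (w : ℕ → ℝ) (s' : ℕ), s' < N →
      (∑ t : Fin N, if (t : ℕ) ≤ s' then w (t : ℕ) else 0) =
        ∑ t ∈ Finset.range (s' + 1), w t := by
    intro N w s' hs
    rw [Fin.sum_univ_eq_sum_range (fun t => if t ≤ s' then w t else 0) N, ← Finset.sum_filter]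
    congr 1
    ext u
    simp only [Finset.mem_filter, Finset.mem_range, Nat.lt_succ_iff]
    omega
  have teleUp : ∀ (k : Fin m) (M : ℕ),
      (∑ t ∈ Finset.range M, (VUp a b L k (t + 1) - VUp a b L k t)) = VUp a b L k M := by
    intro k M
    rw [Finset.sum_range_sub (VUp a b L k) M, VUp_zero, sub_zero]
  have teleDown : ∀ (r : Fin n) (M : ℕ),
      (∑ t ∈ Finset.range M, (VDown a b L r (t + 1) - VDown a b L r t)) = VDown a b L r M := by
    intro r M
    rw [Finset.sum_range_sub (VDown a b L r) M, VDown_zero, sub_zero]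
  have marg : ∀ x y : S, x ≠ y →
      (∑ idx ∈ Finset.univ.filter (fun idx => gIdx a b L idx x = y), wIdx a b L idx) = L x y := by
    intro x y hxy
    rw [Finset.sum_filter, Fintype.sum_sum_type, Fintype.sum_sum_type, Fintype.sum_sum_type]
    simp only [Fintype.sum_prod_type, gIdx, wIdx]
    rcases huniv x with ⟨i, rfl⟩ | ⟨j, rfl⟩
    · rcases huniv y with ⟨r, rfl⟩ | ⟨k, rfl⟩
      · have hir : i ≠ r := fun h => hxy (congrArg a h)
        have hS1 : (∑ k : Fin m, ∑ t : Fin n,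
            if fUp a b L k t (a i) = a r then
              VUp a b L k ((t : ℕ) + 1) - VUp a b L k (t : ℕ) else 0) = 0 := by
          refine Finset.sum_eq_zero fun k _ => Finset.sum_eq_zero fun t _ => ?_
          rw [fUp_a]
          by_cases hc : (t : ℕ) ≤ (((sUp a b L k).symm i : Fin n) : ℕ)
          · rw [if_pos hc, if_neg (hba k r)]
          · rw [if_neg hc, if_neg (fun h : (a i : S) = a r => hir (hinja h))]
        have hS2 : (∑ r' : Fin n, ∑ t : Fin m,
            if fDown a b L r' t (a i) = a r then
              VDown a b L r' ((t : ℕ) + 1) - VDown a b L r' (t : ℕ) else 0) =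
            VDown a b L r m := by
          have h0 : ∀ r' ∈ (Finset.univ : Finset (Fin n)), r' ≠ r →
              (∑ t : Fin m, if fDown a b L r' t (a i) = a r then
                VDown a b L r' ((t : ℕ) + 1) - VDown a b L r' (t : ℕ) else 0) = 0 := by
            intro r' _ hr'
            exact Finset.sum_eq_zero fun t _ => by
              rw [fDown_a, if_neg (fun h : (a r' : S) = a r => hr' (hinja h))]
          rw [Finset.sum_eq_single r h0 (fun h => absurd (Finset.mem_univ r) h)]
          have hterm : ∀ t : Fin m, (if fDown a b L r t (a i) = a r then
              VDown a b L r ((t : ℕ) + 1) - VDown a b L r (t : ℕ) else 0) =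
              VDown a b L r ((t : ℕ) + 1) - VDown a b L r (t : ℕ) := fun t => by
            rw [fDown_a, if_pos rfl]
          rw [Finset.sum_congr rfl (fun t _ => hterm t),
            Fin.sum_univ_eq_sum_range (fun s => VDown a b L r (s + 1) - VDown a b L r s) m]
          exact teleDown r m
        have hS3 : (∑ i' : Fin n, ∑ r' : Fin n,
            if (if a i = a i' then a r' else a i) = a r then
              (if i' = r' then 0 else L (a i') (a r') - VDown a b L r' m) else 0) =
            L (a i) (a r) - VDown a b L r m := by
          have h0 : ∀ i' ∈ (Finset.univ : Finset (Fin n)), i' ≠ i →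
              (∑ r' : Fin n, if (if a i = a i' then a r' else a i) = a r then
                (if i' = r' then 0 else L (a i') (a r') - VDown a b L r' m) else 0) = 0 := by
            intro i' _ hi'
            refine Finset.sum_eq_zero fun r' _ => ?_
            rw [if_neg (fun h : a i = a i' => hi' (hinja h).symm),
              if_neg (fun h : (a i : S) = a r => hir (hinja h))]
          rw [Finset.sum_eq_single i h0 (fun h => absurd (Finset.mem_univ i) h)]
          have h0' : ∀ r' ∈ (Finset.univ : Finset (Fin n)), r' ≠ r →
              (if (if a i = a i then a r' else a i) = a r then
                (if i = r' then 0 else L (a i) (a r') - VDown a b L r' m) else 0) = 0 := by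
            intro r' _ hr'
            rw [if_pos rfl, if_neg (fun h : (a r' : S) = a r => hr' (hinja h))]
          rw [Finset.sum_eq_single r h0' (fun h => absurd (Finset.mem_univ r) h)]
          rw [if_pos rfl, if_pos rfl, if_neg hir]
        have hS4 : (∑ j' : Fin m, ∑ k' : Fin m,
            if (if a i = b j' then b k' else a i) = a r then
              (if j' = k' then 0 else L (b j') (b k') - VUp a b L k' n) else 0) = 0 := by
          refine Finset.sum_eq_zero fun j' _ => Finset.sum_eq_zero fun k' _ => ?_
          rw [if_neg (hdisj i j'), if_neg (fun h : (a i : S) = a r => hir (hinja h))]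
        erw [hS1, hS2, hS3, hS4]
        ring
      · have hS1 : (∑ k' : Fin m, ∑ t : Fin n,
            if fUp a b L k' t (a i) = b k then
              VUp a b L k' ((t : ℕ) + 1) - VUp a b L k' (t : ℕ) else 0) = L (a i) (b k) := by
          have h0 : ∀ k' ∈ (Finset.univ : Finset (Fin m)), k' ≠ k →
              (∑ t : Fin n, if fUp a b L k' t (a i) = b k then
                VUp a b L k' ((t : ℕ) + 1) - VUp a b L k' (t : ℕ) else 0) = 0 := by
            intro k' _ hk'
            refine Finset.sum_eq_zero fun t _ => ?_
            rw [fUp_a]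
            by_cases hc : (t : ℕ) ≤ (((sUp a b L k').symm i : Fin n) : ℕ)
            · rw [if_pos hc, if_neg (fun h : (b k' : S) = b k => hk' (hinjb h))]
            · rw [if_neg hc, if_neg (hdisj i k)]
          rw [Finset.sum_eq_single k h0 (fun h => absurd (Finset.mem_univ k) h)]
          have hterm : ∀ t : Fin n, (if fUp a b L k t (a i) = b k then
              VUp a b L k ((t : ℕ) + 1) - VUp a b L k (t : ℕ) else 0) =
              (if (t : ℕ) ≤ (((sUp a b L k).symm i : Fin n) : ℕ) then
                VUp a b L k ((t : ℕ) + 1) - VUp a b L k (t : ℕ) else 0) := by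
            intro t
            rw [fUp_a]
            by_cases hc : (t : ℕ) ≤ (((sUp a b L k).symm i : Fin n) : ℕ)
            · rw [if_pos hc, if_pos hc, if_pos rfl]
            · rw [if_neg hc, if_neg hc, if_neg (hdisj i k)]
          rw [Finset.sum_congr rfl (fun t _ => hterm t),
            sum_fin_ite n (fun s => VUp a b L k (s + 1) - VUp a b L k s)
              (((sUp a b L k).symm i : Fin n) : ℕ) (Fin.isLt _),
            teleUp k ((((sUp a b L k).symm i : Fin n) : ℕ) + 1),
            VUp_succ k (((sUp a b L k).symm i : Fin n) : ℕ) (Fin.isLt _)]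
          show L (a ((sUp a b L k) ((sUp a b L k).symm i))) (b k) = L (a i) (b k)
          rw [Equiv.apply_symm_apply]
        have hS2 : (∑ r' : Fin n, ∑ t : Fin m,
            if fDown a b L r' t (a i) = b k then
              VDown a b L r' ((t : ℕ) + 1) - VDown a b L r' (t : ℕ) else 0) = 0 := by
          refine Finset.sum_eq_zero fun r' _ => Finset.sum_eq_zero fun t _ => ?_
          rw [fDown_a, if_neg (hdisj r' k)]
        have hS3 : (∑ i' : Fin n, ∑ r' : Fin n,
            if (if a i = a i' then a r' else a i) = b k then
              (if i' = r' then 0 else L (a i') (a r') - VDown a b L r' m) else 0) = 0 := by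
          refine Finset.sum_eq_zero fun i' _ => Finset.sum_eq_zero fun r' _ => ?_
          by_cases hc : a i = a i'
          · rw [if_pos hc, if_neg (hdisj r' k)]
          · rw [if_neg hc, if_neg (hdisj i k)]
        have hS4 : (∑ j' : Fin m, ∑ k' : Fin m,
            if (if a i = b j' then b k' else a i) = b k then
              (if j' = k' then 0 else L (b j') (b k') - VUp a b L k' n) else 0) = 0 := by
          refine Finset.sum_eq_zero fun j' _ => Finset.sum_eq_zero fun k' _ => ?_
          rw [if_neg (hdisj i j'), if_neg (hdisj i k)]
        erw [hS1, hS2, hS3, hS4]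
        ring
    · rcases huniv y with ⟨r, rfl⟩ | ⟨k, rfl⟩
      · have hS1 : (∑ k' : Fin m, ∑ t : Fin n,
            if fUp a b L k' t (b j) = a r then
              VUp a b L k' ((t : ℕ) + 1) - VUp a b L k' (t : ℕ) else 0) = 0 := by
          refine Finset.sum_eq_zero fun k' _ => Finset.sum_eq_zero fun t _ => ?_
          rw [fUp_b, if_neg (hba k' r)]
        have hS2 : (∑ r' : Fin n, ∑ t : Fin m,
            if fDown a b L r' t (b j) = a r then
              VDown a b L r' ((t : ℕ) + 1) - VDown a b L r' (t : ℕ) else 0) =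
            L (b j) (a r) := by
          have h0 : ∀ r' ∈ (Finset.univ : Finset (Fin n)), r' ≠ r →
              (∑ t : Fin m, if fDown a b L r' t (b j) = a r then
                VDown a b L r' ((t : ℕ) + 1) - VDown a b L r' (t : ℕ) else 0) = 0 := by
            intro r' _ hr'
            refine Finset.sum_eq_zero fun t _ => ?_
            rw [fDown_b]
            by_cases hc : (t : ℕ) ≤ (((sDown a b L r').symm j : Fin m) : ℕ)
            · rw [if_pos hc, if_neg (fun h : (a r' : S) = a r => hr' (hinja h))]
            · rw [if_neg hc, if_neg (hba j r)]
          rw [Finset.sum_eq_single r h0 (fun h => absurd (Finset.mem_univ r) h)]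
          have hterm : ∀ t : Fin m, (if fDown a b L r t (b j) = a r then
              VDown a b L r ((t : ℕ) + 1) - VDown a b L r (t : ℕ) else 0) =
              (if (t : ℕ) ≤ (((sDown a b L r).symm j : Fin m) : ℕ) then
                VDown a b L r ((t : ℕ) + 1) - VDown a b L r (t : ℕ) else 0) := by
            intro t
            rw [fDown_b]
            by_cases hc : (t : ℕ) ≤ (((sDown a b L r).symm j : Fin m) : ℕ)
            · rw [if_pos hc, if_pos hc, if_pos rfl]
            · rw [if_neg hc, if_neg hc, if_neg (hba j r)]
          rw [Finset.sum_congr rfl (fun t _ => hterm t),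
            sum_fin_ite m (fun s => VDown a b L r (s + 1) - VDown a b L r s)
              (((sDown a b L r).symm j : Fin m) : ℕ) (Fin.isLt _),
            teleDown r ((((sDown a b L r).symm j : Fin m) : ℕ) + 1),
            VDown_succ r (((sDown a b L r).symm j : Fin m) : ℕ) (Fin.isLt _)]
          show L (b ((sDown a b L r) ((sDown a b L r).symm j))) (a r) = L (b j) (a r)
          rw [Equiv.apply_symm_apply]
        have hS3 : (∑ i' : Fin n, ∑ r' : Fin n,
            if (if b j = a i' then a r' else b j) = a r then
              (if i' = r' then 0 else L (a i') (a r') - VDown a b L r' m) else 0) = 0 := by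
          refine Finset.sum_eq_zero fun i' _ => Finset.sum_eq_zero fun r' _ => ?_
          rw [if_neg (hba j i'), if_neg (hba j r)]
        have hS4 : (∑ j' : Fin m, ∑ k' : Fin m,
            if (if b j = b j' then b k' else b j) = a r then
              (if j' = k' then 0 else L (b j') (b k') - VUp a b L k' n) else 0) = 0 := by
          refine Finset.sum_eq_zero fun j' _ => Finset.sum_eq_zero fun k' _ => ?_
          by_cases hc : b j = b j'
          · rw [if_pos hc, if_neg (hba k' r)]
          · rw [if_neg hc, if_neg (hba j r)]
        erw [hS1, hS2, hS3, hS4]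
        ring
      · have hjk : j ≠ k := fun h => hxy (congrArg b h)
        have hS1 : (∑ k' : Fin m, ∑ t : Fin n,
            if fUp a b L k' t (b j) = b k then
              VUp a b L k' ((t : ℕ) + 1) - VUp a b L k' (t : ℕ) else 0) =
            VUp a b L k n := by
          have h0 : ∀ k' ∈ (Finset.univ : Finset (Fin m)), k' ≠ k →
              (∑ t : Fin n, if fUp a b L k' t (b j) = b k then
                VUp a b L k' ((t : ℕ) + 1) - VUp a b L k' (t : ℕ) else 0) = 0 := by
            intro k' _ hk'
            exact Finset.sum_eq_zero fun t _ => by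
              rw [fUp_b, if_neg (fun h : (b k' : S) = b k => hk' (hinjb h))]
          rw [Finset.sum_eq_single k h0 (fun h => absurd (Finset.mem_univ k) h)]
          have hterm : ∀ t : Fin n, (if fUp a b L k t (b j) = b k then
              VUp a b L k ((t : ℕ) + 1) - VUp a b L k (t : ℕ) else 0) =
              VUp a b L k ((t : ℕ) + 1) - VUp a b L k (t : ℕ) := fun t => by
            rw [fUp_b, if_pos rfl]
          rw [Finset.sum_congr rfl (fun t _ => hterm t),
            Fin.sum_univ_eq_sum_range (fun s => VUp a b L k (s + 1) - VUp a b L k s) n]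
          exact teleUp k n
        have hS2 : (∑ r' : Fin n, ∑ t : Fin m,
            if fDown a b L r' t (b j) = b k then
              VDown a b L r' ((t : ℕ) + 1) - VDown a b L r' (t : ℕ) else 0) = 0 := by
          refine Finset.sum_eq_zero fun r' _ => Finset.sum_eq_zero fun t _ => ?_
          rw [fDown_b]
          by_cases hc : (t : ℕ) ≤ (((sDown a b L r').symm j : Fin m) : ℕ)
          · rw [if_pos hc, if_neg (hdisj r' k)]
          · rw [if_neg hc, if_neg (fun h : (b j : S) = b k => hjk (hinjb h))]
        have hS3 : (∑ i' : Fin n, ∑ r' : Fin n,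
            if (if b j = a i' then a r' else b j) = b k then
              (if i' = r' then 0 else L (a i') (a r') - VDown a b L r' m) else 0) = 0 := by
          refine Finset.sum_eq_zero fun i' _ => Finset.sum_eq_zero fun r' _ => ?_
          rw [if_neg (hba j i'), if_neg (fun h : (b j : S) = b k => hjk (hinjb h))]
        have hS4 : (∑ j' : Fin m, ∑ k' : Fin m,
            if (if b j = b j' then b k' else b j) = b k then
              (if j' = k' then 0 else L (b j') (b k') - VUp a b L k' n) else 0) =
            L (b j) (b k) - VUp a b L k n := by
          have h0 : ∀ j' ∈ (Finset.univ : Finset (Fin m)), j' ≠ j →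
              (∑ k' : Fin m, if (if b j = b j' then b k' else b j) = b k then
                (if j' = k' then 0 else L (b j') (b k') - VUp a b L k' n) else 0) = 0 := by
            intro j' _ hj'
            refine Finset.sum_eq_zero fun k' _ => ?_
            rw [if_neg (fun h : b j = b j' => hj' (hinjb h).symm),
              if_neg (fun h : (b j : S) = b k => hjk (hinjb h))]
          rw [Finset.sum_eq_single j h0 (fun h => absurd (Finset.mem_univ j) h)]
          have h0' : ∀ k' ∈ (Finset.univ : Finset (Fin m)), k' ≠ k →
              (if (if b j = b j then b k' else b j) = b k then
                (if j = k' then 0 else L (b j) (b k') - VUp a b L k' n) else 0) = 0 := by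
            intro k' _ hk'
            rw [if_pos rfl, if_neg (fun h : (b k' : S) = b k => hk' (hinjb h))]
          rw [Finset.sum_eq_single k h0' (fun h => absurd (Finset.mem_univ k) h)]
          rw [if_pos rfl, if_pos rfl, if_neg hjk]
        erw [hS1, hS2, hS3, hS4]
        ring
  refine ⟨fun f => ∑ idx ∈ Finset.univ.filter (fun idx => gIdx a b L idx = f), wIdx a b L idx,
    ?_, ?_, ?_⟩
  · intro f
    refine Finset.sum_nonneg fun idx _ => ?_
    rcases idx with ⟨k, t⟩ | ⟨r, t⟩ | ⟨i, r⟩ | ⟨j, k⟩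
    · exact wUp_nonneg k t
    · exact wDown_nonneg r t
    · show (0 : ℝ) ≤ if i = r then 0 else L (a i) (a r) - VDown a b L r m
      split_ifs with h
      · exact le_refl 0
      · exact sub_nonneg.2 (VDown_top r i h)
    · show (0 : ℝ) ≤ if j = k then 0 else L (b j) (b k) - VUp a b L k n
      split_ifs with h
      · exact le_refl 0
      · exact sub_nonneg.2 (VUp_top k j h)
  · intro f hf
    refine Finset.sum_eq_zero fun idx hidx => ?_
    have hg : gIdx a b L idx = f := (Finset.mem_filter.1 hidx).2
    exact absurd (hg ▸ monog idx) hf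
  · intro x y hxy
    have hmaps : ∀ idx ∈ Finset.univ.filter (fun idx => gIdx a b L idx x = y),
        gIdx a b L idx ∈ Finset.univ.filter (fun f : S → S => f x = y) := by
      intro idx hidx
      simp only [Finset.mem_filter, Finset.mem_univ, true_and] at hidx ⊢
      exact hidx
    have hfib := Finset.sum_fiberwise_of_maps_to hmaps (wIdx a b L)
    rw [← marg x y hxy, ← hfib]
    refine Finset.sum_congr rfl fun f hf => ?_
    have hfx : f x = y := (Finset.mem_filter.1 hf).2
    congr 1
    ext idx
    simp only [Finset.mem_filter, Finset.mem_univ, true_and]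
    constructor
    · rintro ⟨h1, h2⟩
      exact h2
    · intro h2
      exact ⟨by rw [h2]; exact hfx, h2⟩
end

section
/- Let S be an induced sub-poset of a finite poset S′, let L be a stochastically monotone generator on S, and let L′ be a stochastically monotone generator on S′ with L′_{x,y} = L_{x,y} for all x,y ∈ S. If L′ is realizably monotone on S′, then L is realizably monotone on S. -/
open Finset

/-- **Lemma 4.1** (restriction lemma). Let `S` be an induced sub-poset of `S′`
(here the coercion of a `Finset T` of `S′`, with the induced order), `L` a
stochastically monotone generator on `S` and `L′` a stochastically monotone
generator on `S′` agreeing with `L` on `S`. If `L′` is realizably monotone on `S′`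
then `L` is realizably monotone on `S`. -/
theorem stmt11 {S' : Type*} [Fintype S'] [DecidableEq S'] [PartialOrder S']
    (T : Finset S')
    (L : {x // x ∈ T} → {x // x ∈ T} → ℝ) (L' : S' → S' → ℝ)
    (hL : IsGenerator L) (hL' : IsGenerator L')
    (hmon : StochMonGen L) (hmon' : StochMonGen L')
    (hagree : ∀ x y : {x // x ∈ T}, L' (x : S') (y : S') = L x y)
    (hrm : RealizablyMonotoneGen L') :
    RealizablyMonotoneGen L := by
  classical
  obtain ⟨Λ', hnn, hmonoΛ, hsum⟩ := hrm
  -- restriction map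
  set r : (S' → S') → ({x // x ∈ T} → {x // x ∈ T}) := fun f' x =>
    if h : f' (x : S') ∈ T then ⟨f' (x : S'), h⟩ else x with hr
  -- L' x z = 0 for x ∈ T, z ∉ T
  have hzero : ∀ (x : {x // x ∈ T}) (z : S'), z ∉ T → L' (x : S') z = 0 := by
    intro x z hz
    have hsplit : ∑ y : S', L' (x : S') y
        = ∑ y ∈ T, L' (x : S') y + ∑ y ∈ Tᶜ, L' (x : S') y := by
      rw [← Finset.sum_add_sum_compl T]
    have hT : ∑ y ∈ T, L' (x : S') y = 0 := by
      have : ∑ y ∈ T, L' (x : S') y = ∑ y : {x // x ∈ T}, L x y := by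
        rw [← Finset.sum_attach T (fun y => L' (x : S') y)]
        exact Finset.sum_congr rfl fun y _ => hagree x y
      rw [this, hL.2 x]
    have htot := hL'.2 (x : S')
    have hcomp : ∑ y ∈ Tᶜ, L' (x : S') y = 0 := by
      rw [hsplit, hT] at htot; linarith
    have hnneg : ∀ y ∈ Tᶜ, 0 ≤ L' (x : S') y := by
      intro y hy
      refine hL'.1 _ _ fun h => ?_
      exact (Finset.mem_compl.mp hy) (h ▸ x.2)
    have := (Finset.sum_eq_zero_iff_of_nonneg hnneg).mp hcomp
    exact this z (Finset.mem_compl.mpr hz)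
  -- any f' with Λ' f' ≠ 0 maps T into T
  have hmaps : ∀ f' : S' → S', Λ' f' ≠ 0 → ∀ x : {x // x ∈ T}, f' (x : S') ∈ T := by
    intro f' hf' x
    by_contra hout
    have hne : (x : S') ≠ f' (x : S') := fun h => hout (h ▸ x.2)
    have : 0 < ∑ g ∈ Finset.univ.filter (fun g : S' → S' => g (x : S') = f' (x : S')), Λ' g := by
      refine Finset.sum_pos' (fun g _ => hnn g) ⟨f', ?_, lt_of_le_of_ne (hnn f') (Ne.symm hf')⟩
      simp
    rw [← hsum _ _ hne, hzero x _ hout] at this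
    exact lt_irrefl 0 this
  refine ⟨fun f => ∑ f' ∈ Finset.univ.filter (fun f' => r f' = f), Λ' f', ?_, ?_, ?_⟩
  · intro f; exact Finset.sum_nonneg fun f' _ => hnn f'
  · intro f hf
    refine Finset.sum_eq_zero fun f' hf' => ?_
    by_contra hne
    have hmono' : Monotone f' := by
      by_contra h; exact hne (hmonoΛ f' h)
    have hrf : r f' = f := (Finset.mem_filter.mp hf').2
    apply hf
    intro a b hab
    rw [← hrf]
    have ha := hmaps f' hne a
    have hb := hmaps f' hne b
    simp only [hr, dif_pos ha, dif_pos hb]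
    exact Subtype.mk_le_mk.mpr (hmono' hab)
  · intro x y hxy
    have hxy' : (x : S') ≠ (y : S') := fun h => hxy (Subtype.ext h)
    have key : ∀ f' : S' → S', (r f' x = y) ↔ (f' (x : S') = (y : S')) := by
      intro f'
      by_cases h : f' (x : S') ∈ T
      · simp only [hr, dif_pos h, Subtype.ext_iff]
      · simp only [hr, dif_neg h]
        constructor
        · intro hxe; exact absurd (congrArg Subtype.val hxe) hxy'
        · intro he; exact absurd (he ▸ y.2) h
    calc L x y = L' (x : S') (y : S') := (hagree x y).symm
      _ = ∑ f' ∈ Finset.univ.filter (fun f' : S' → S' => f' (x : S') = (y : S')), Λ' f' :=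
          hsum _ _ hxy'
      _ = ∑ f' ∈ Finset.univ.filter (fun f' : S' → S' => r f' x = y), Λ' f' := by
          refine Finset.sum_congr ?_ fun _ _ => rfl
          ext f'; simp [key f']
      _ = ∑ f ∈ Finset.univ.filter
            (fun f : {x // x ∈ T} → {x // x ∈ T} => f x = y),
            ∑ f' ∈ Finset.univ.filter (fun f' => r f' = f), Λ' f' := by
          rw [Finset.sum_fiberwise_eq_sum_filter Finset.univ _ r Λ']
          refine Finset.sum_congr ?_ fun _ _ => rfl
          ext f'; simp
end

section
/- Let S be the k-crown poset (k ≥ 3) with minimal elements x₀,…,x_k and maximal elements y₀,…,y_k, where x_i < y_i and x_i < y_{i−1 mod k+1}. The generator L with L_{x_k,y_k} = L_{y_{k−1},y_k} = 1, L_{x_i,x_k} = 1 for i = 0,…,k−1, L_{y_k,x_k} = 1, L_{y_i,x_k} = 1 for i = 0,…,k−2, and all other off-diagonal rates zero, is stochastically monotone but not realizably monotone. -/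
open Finset

/-- **Remark 4.4** (the `k`-crown generator). On the `k`-crown (`k ≥ 3`), with
minimal elements `x₀,…,x_k`, maximal elements `y₀,…,y_k`, and `xᵢ < yᵢ`,
`xᵢ < y_{i-1 (mod k+1)}`, the generator with `L x_k y_k = L y_{k-1} y_k = 1`,
`L xᵢ x_k = 1` for `i ≠ k`, `L y_k x_k = 1`, `L yᵢ x_k = 1` for `i ≠ k, k-1`,
and all other off-diagonal rates zero, is stochastically monotone but not
realizably monotone. -/
theorem stmt13 {S : Type*} [Fintype S] [DecidableEq S] [PartialOrder S]
    (k : ℕ) (hk : 3 ≤ k) (x y : Fin (k + 1) → S)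
    (hinjx : Function.Injective x) (hinjy : Function.Injective y)
    (hdisj : ∀ i j, x i ≠ y j)
    (huniv : ∀ s : S, (∃ i, s = x i) ∨ (∃ i, s = y i))
    (hle : ∀ s t : S, s ≤ t ↔
      (s = t ∨ ∃ i, s = x i ∧ (t = y i ∨ t = y (i - 1))))
    (L : S → S → ℝ) (hL : IsGenerator L)
    (h1 : L (x (Fin.last k)) (y (Fin.last k)) = 1)
    (h2 : L (y (Fin.last k - 1)) (y (Fin.last k)) = 1)
    (h3 : ∀ i, i ≠ Fin.last k → L (x i) (x (Fin.last k)) = 1)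
    (h4 : L (y (Fin.last k)) (x (Fin.last k)) = 1)
    (h5 : ∀ i, i ≠ Fin.last k → i ≠ Fin.last k - 1 → L (y i) (x (Fin.last k)) = 1)
    (h0 : ∀ s t : S, s ≠ t → L s t ≠ 0 →
      ((s, t) = (x (Fin.last k), y (Fin.last k)) ∨
       (s, t) = (y (Fin.last k - 1), y (Fin.last k)) ∨
       (∃ i, i ≠ Fin.last k ∧ (s, t) = (x i, x (Fin.last k))) ∨
       (s, t) = (y (Fin.last k), x (Fin.last k)) ∨
       (∃ i, i ≠ Fin.last k ∧ i ≠ Fin.last k - 1 ∧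
          (s, t) = (y i, x (Fin.last k))))) :
    StochMonGen L ∧ ¬ RealizablyMonotoneGen L := by
  classical
  obtain ⟨hLnn, hLrow⟩ := hL
  set lk := Fin.last k with hlkdef
  -- index arithmetic facts
  have hlkval : (lk : ℕ) = k := by rw [hlkdef]; exact Fin.val_last k
  have hsub : ∀ i : Fin (k+1), ((i - 1 : Fin (k+1)) : ℕ) = if (i:ℕ) = 0 then k else (i:ℕ) - 1 := by
    intro i
    have hi := i.isLt
    rw [Fin.sub_def]
    simp only [Fin.val_one']
    have h1' : 1 % (k+1) = 1 := Nat.mod_eq_of_lt (by omega)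
    rw [h1']
    rcases Nat.eq_zero_or_pos (i : ℕ) with h | h
    · rw [h, if_pos rfl]
      have e : k + 1 - 1 + 0 = k := by omega
      show (k + 1 - 1 + (0:ℕ)) % (k+1) = k
      rw [e, Nat.mod_eq_of_lt (by omega)]
    · rw [if_neg (by omega)]
      show (k + 1 - 1 + (i:ℕ)) % (k+1) = (i:ℕ) - 1
      have e : k + 1 - 1 + (i:ℕ) = ((i:ℕ) - 1) + (k + 1) := by omega
      rw [e, Nat.add_mod_right, Nat.mod_eq_of_lt (by omega)]
  have hl1 : ((lk - 1 : Fin (k+1)) : ℕ) = k - 1 := by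
    rw [hsub, hlkval, if_neg (by omega)]
  have hl2 : ((lk - 1 - 1 : Fin (k+1)) : ℕ) = k - 2 := by
    rw [hsub, hl1, if_neg (by omega)]
    omega
  have hne1 : lk ≠ lk - 1 := Fin.ne_of_val_ne (by rw [hlkval, hl1]; omega)
  have h0lk : (0 : Fin (k+1)) ≠ lk := Fin.ne_of_val_ne (by rw [Fin.val_zero, hlkval]; omega)
  have h0sub : (0 : Fin (k+1)) - 1 = lk := by
    apply Fin.ext
    rw [hsub]
    simp [hlkval]
  have finmk_ne_lk : ∀ (m : ℕ) (h : m < k + 1), m ≠ k → (⟨m, h⟩ : Fin (k+1)) ≠ lk :=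
    fun m h hm => Fin.ne_of_val_ne (by rw [hlkval]; exact hm)
  have finmk_ne_l1 : ∀ (m : ℕ) (h : m < k + 1), m ≠ k - 1 → (⟨m, h⟩ : Fin (k+1)) ≠ lk - 1 :=
    fun m h hm => Fin.ne_of_val_ne (by rw [hl1]; exact hm)
  have finmk_eq : ∀ (m : ℕ) (h : m < k+1) (j : Fin (k+1)), (⟨m, h⟩ : Fin (k+1)) = j → m = (j:ℕ) :=
    fun m h j e => congrArg Fin.val e
  -- order facts
  have xley : ∀ i, x i ≤ y i := fun i => (hle _ _).mpr (Or.inr ⟨i, rfl, Or.inl rfl⟩)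
  have xley' : ∀ i, x i ≤ y (i - 1) := fun i => (hle _ _).mpr (Or.inr ⟨i, rfl, Or.inr rfl⟩)
  have yle : ∀ j (t : S), y j ≤ t → t = y j := by
    intro j t h
    rcases (hle _ _).mp h with h' | ⟨m, hm, _⟩
    · exact h'.symm
    · exact absurd hm.symm (hdisj m j)
  have xle : ∀ i (t : S), x i ≤ t → t = x i ∨ t = y i ∨ t = y (i - 1) := by
    intro i t h
    rcases (hle _ _).mp h with h' | ⟨m, hm, hm2⟩
    · exact Or.inl h'.symm
    · have him : i = m := hinjx hm
      subst him
      rcases hm2 with h' | h'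
      · exact Or.inr (Or.inl h')
      · exact Or.inr (Or.inr h')
  have hxy_lk : x lk ≤ y lk := xley lk
  -- row structure lemmas
  have rowx_last : ∀ z, z ≠ x lk → z ≠ y lk → L (x lk) z = 0 := by
    intro z hz1 hz2
    by_contra hne
    rcases h0 _ _ (Ne.symm hz1) hne with h | h | ⟨i, hi, h⟩ | h | ⟨i, hi, _, h⟩
    · exact hz2 (congrArg Prod.snd h)
    · exact hdisj lk (lk-1) (congrArg Prod.fst h)
    · exact hi (hinjx (congrArg Prod.fst h)).symm
    · exact hdisj lk lk (congrArg Prod.fst h)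
    · exact hdisj lk i (congrArg Prod.fst h)
  have rowx : ∀ i, i ≠ lk → ∀ z, z ≠ x i → z ≠ x lk → L (x i) z = 0 := by
    intro i hi z hz1 hz2
    by_contra hne
    rcases h0 _ _ (Ne.symm hz1) hne with h | h | ⟨m, hm, h⟩ | h | ⟨m, hm, _, h⟩
    · exact hi (hinjx (congrArg Prod.fst h))
    · exact hdisj i (lk-1) (congrArg Prod.fst h)
    · exact hz2 (congrArg Prod.snd h)
    · exact hdisj i lk (congrArg Prod.fst h)
    · exact hdisj i m (congrArg Prod.fst h)
  have rowy1 : ∀ z, z ≠ y (lk - 1) → z ≠ y lk → L (y (lk - 1)) z = 0 := by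
    intro z hz1 hz2
    by_contra hne
    rcases h0 _ _ (Ne.symm hz1) hne with h | h | ⟨m, hm, h⟩ | h | ⟨m, hm, hm2, h⟩
    · exact hdisj lk (lk - 1) (congrArg Prod.fst h).symm
    · exact hz2 (congrArg Prod.snd h)
    · exact hdisj m (lk - 1) (congrArg Prod.fst h).symm
    · exact hne1 (hinjy (congrArg Prod.fst h)).symm
    · exact hm2 (hinjy (congrArg Prod.fst h)).symm
  have rowy : ∀ j, j ≠ lk - 1 → ∀ z, z ≠ y j → z ≠ x lk → L (y j) z = 0 := by
    intro j hj z hz1 hz2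
    by_contra hne
    rcases h0 _ _ (Ne.symm hz1) hne with h | h | ⟨m, hm, h⟩ | h | ⟨m, hm, hm2, h⟩
    · exact hdisj lk j (congrArg Prod.fst h).symm
    · exact hj (hinjy (congrArg Prod.fst h))
    · exact hdisj m j (congrArg Prod.fst h).symm
    · exact hz2 (congrArg Prod.snd h)
    · exact hz2 (congrArg Prod.snd h)
  have yval : ∀ j, j ≠ lk - 1 → L (y j) (x lk) = 1 := by
    intro j hj
    by_cases hjl : j = lk
    · rw [hjl]; exact h4
    · exact h5 j hjl hj
  -- sum over a set of a single row
  have rowsum : ∀ (Γ : Finset S) (s t : S), s ∉ Γ → L s t = 1 →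
      (∀ z, z ≠ s → z ≠ t → L s z = 0) →
      ∑ z ∈ Γ, L s z = if t ∈ Γ then 1 else 0 := by
    intro Γ s t hs hst hrow
    have hcg : ∀ z ∈ Γ, L s z = if z = t then (1:ℝ) else 0 := by
      intro z hz
      by_cases h : z = t
      · rw [if_pos h, h, hst]
      · rw [if_neg h]
        exact hrow z (fun e => hs (e ▸ hz)) h
    rw [Finset.sum_congr rfl hcg, Finset.sum_ite_eq' Γ t (fun _ => (1:ℝ))]
  refine ⟨⟨?_, ?_⟩, ?_⟩
  · -- up-set monotonicity
    intro Γ hΓ s t hst hsΓ htΓ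
    rcases (hle s t).mp hst with rfl | ⟨i, rfl, hti⟩
    · exact le_refl _
    by_cases hi : i = lk
    · subst hi
      rw [rowsum Γ _ _ hsΓ h1 rowx_last]
      rcases hti with rfl | rfl
      · rw [rowsum Γ _ _ htΓ h4 (rowy lk hne1), if_neg htΓ]
        split <;> norm_num
      · rw [rowsum Γ _ _ htΓ h2 rowy1]
    · rw [rowsum Γ _ _ hsΓ (h3 i hi) (rowx i hi)]
      rcases hti with rfl | rfl
      · by_cases hi1 : i = lk - 1
        · subst hi1
          rw [rowsum Γ _ _ htΓ h2 rowy1]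
          by_cases hxΓ : x lk ∈ Γ
          · rw [if_pos hxΓ, if_pos (hΓ _ hxΓ _ hxy_lk)]
          · rw [if_neg hxΓ]
            split <;> norm_num
        · rw [rowsum Γ _ _ htΓ (yval i hi1) (rowy i hi1)]
      · have hi1 : i - 1 ≠ lk - 1 := fun h => hi (by rwa [sub_left_inj] at h)
        rw [rowsum Γ _ _ htΓ (yval _ hi1) (rowy _ hi1)]
  · -- down-set monotonicity
    intro Γ hΓ s t hst hsΓ htΓ
    rcases (hle s t).mp hst with rfl | ⟨i, rfl, hti⟩
    · exact le_refl _
    by_cases hi : i = lk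
    · subst hi
      rw [rowsum Γ _ _ hsΓ h1 rowx_last]
      rcases hti with rfl | rfl
      · rw [rowsum Γ _ _ htΓ h4 (rowy lk hne1), if_neg hsΓ]
        split <;> norm_num
      · rw [rowsum Γ _ _ htΓ h2 rowy1]
    · rw [rowsum Γ _ _ hsΓ (h3 i hi) (rowx i hi)]
      rcases hti with rfl | rfl
      · by_cases hi1 : i = lk - 1
        · subst hi1
          rw [rowsum Γ _ _ htΓ h2 rowy1]
          by_cases hyΓ : y lk ∈ Γ
          · rw [if_pos hyΓ, if_pos (hΓ _ hyΓ _ hxy_lk)]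
          · rw [if_neg hyΓ]
            split <;> norm_num
        · rw [rowsum Γ _ _ htΓ (yval i hi1) (rowy i hi1)]
      · have hi1 : i - 1 ≠ lk - 1 := fun h => hi (by rwa [sub_left_inj] at h)
        rw [rowsum Γ _ _ htΓ (yval _ hi1) (rowy _ hi1)]
  · -- not realizably monotone
    rintro ⟨Λ, hΛnn, hΛmono, hrep⟩
    have hsupp : ∀ f : S → S, Λ f ≠ 0 → ∀ s, f s ≠ s → L s (f s) ≠ 0 := by
      intro f hf s hfs
      have h := hrep s (f s) (Ne.symm hfs)
      have hmem : f ∈ Finset.univ.filter (fun g : S → S => g s = f s) := by simp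
      have hle' : Λ f ≤ L s (f s) := by
        rw [h]
        exact Finset.single_le_sum (fun g _ => hΛnn g) hmem
      intro hzero
      rw [hzero] at hle'
      exact absurd (lt_of_le_of_ne (hΛnn f) (Ne.symm hf)) (not_lt.mpr hle')
    have optx : ∀ f : S → S, Λ f ≠ 0 → ∀ i, i ≠ lk → f (x i) = x i ∨ f (x i) = x lk := by
      intro f hf i hi
      by_cases h : f (x i) = x i
      · exact Or.inl h
      · by_cases h2 : f (x i) = x lk
        · exact Or.inr h2
        · exact absurd (rowx i hi _ h h2) (hsupp f hf (x i) h)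
    have opty : ∀ f : S → S, Λ f ≠ 0 → ∀ j, j ≠ lk - 1 → f (y j) = y j ∨ f (y j) = x lk := by
      intro f hf j hj
      by_cases h : f (y j) = y j
      · exact Or.inl h
      · by_cases h2 : f (y j) = x lk
        · exact Or.inr h2
        · exact absurd (rowy j hj _ h h2) (hsupp f hf (y j) h)
    have hmono' : ∀ f : S → S, Λ f ≠ 0 → Monotone f := by
      intro f hf
      by_contra hnm
      exact hf (hΛmono f hnm)
    -- chain: f (x lk) = y lk forces f (x 0) = x lk
    have chain : ∀ f : S → S, Λ f ≠ 0 → f (x lk) = y lk → f (x 0) = x lk := by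
      intro f hf hfx
      have hmf : Monotone f := hmono' f hf
      have hy1 : f (y (lk - 1)) = y lk := by
        have h := hmf (xley' lk)
        rw [hfx] at h
        exact yle lk _ h
      have main : ∀ d : ℕ, d ≤ k - 1 → f (x ⟨k - 1 - d, by omega⟩) = x lk := by
        intro d
        induction d with
        | zero =>
          intro _
          have e : (⟨k - 1 - 0, by omega⟩ : Fin (k+1)) = lk - 1 := by
            apply Fin.ext
            rw [hl1]
            show k - 1 - 0 = k - 1
            omega
          rw [e]
          have hcmp : f (x (lk - 1)) ≤ y lk := by
            have h := hmf (xley (lk - 1))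
            rwa [hy1] at h
          rcases optx f hf (lk - 1) (Ne.symm hne1) with h | h
          · exfalso
            rw [h] at hcmp
            rcases xle (lk - 1) _ hcmp with h' | h' | h'
            · exact hdisj (lk - 1) lk h'.symm
            · exact hne1 (hinjy h')
            · have hv := congrArg Fin.val (hinjy h')
              rw [hlkval, hl2] at hv
              omega
          · exact h
        | succ d ih =>
          intro hd
          have ihm : f (x ⟨(k - 1 - (d+1)) + 1, by omega⟩) = x lk := by
            have h := ih (by omega)
            have e : (⟨k - 1 - d, by omega⟩ : Fin (k+1)) = ⟨(k - 1 - (d+1)) + 1, by omega⟩ := by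
              apply Fin.ext
              show k - 1 - d = (k - 1 - (d+1)) + 1
              omega
            rwa [e] at h
          have hmle : k - 1 - (d+1) ≤ k - 2 := by omega
          set m := k - 1 - (d+1) with hmdef
          have hmlt : m < k + 1 := by omega
          have esub : (⟨m + 1, by omega⟩ : Fin (k+1)) - 1 = ⟨m, hmlt⟩ := by
            apply Fin.ext
            rw [hsub]
            show (if m + 1 = 0 then k else m + 1 - 1) = m
            rw [if_neg (by omega)]
            omega
          have hstep1 : f (y ⟨m, hmlt⟩) = x lk := by
            have hcmp : x lk ≤ f (y ⟨m, hmlt⟩) := by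
              have hxy := xley' ⟨m + 1, by omega⟩
              rw [esub] at hxy
              have h := hmf hxy
              rwa [ihm] at h
            rcases opty f hf ⟨m, hmlt⟩ (finmk_ne_l1 m hmlt (by omega)) with h | h
            · exfalso
              rw [h] at hcmp
              rcases xle lk _ hcmp with h' | h' | h'
              · exact hdisj lk ⟨m, hmlt⟩ h'.symm
              · have hv := finmk_eq m hmlt lk (hinjy h')
                rw [hlkval] at hv
                omega
              · have hv := finmk_eq m hmlt (lk - 1) (hinjy h')
                rw [hl1] at hv
                omega
            · exact h
          have hstep2 : f (x ⟨m, hmlt⟩) = x lk := by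
            have hcmp : f (x ⟨m, hmlt⟩) ≤ x lk := by
              have h := hmf (xley ⟨m, hmlt⟩)
              rwa [hstep1] at h
            rcases optx f hf ⟨m, hmlt⟩ (finmk_ne_lk m hmlt (by omega)) with h | h
            · exfalso
              rw [h] at hcmp
              rcases xle ⟨m, hmlt⟩ _ hcmp with h' | h' | h'
              · have hv := finmk_eq m hmlt lk ((hinjx h').symm)
                rw [hlkval] at hv
                omega
              · exact hdisj lk ⟨m, hmlt⟩ h'
              · exact hdisj lk _ h'
            · exact h
          exact hstep2
      have hlast := main (k-1) le_rfl
      have e0 : (⟨k - 1 - (k-1), by omega⟩ : Fin (k+1)) = (0 : Fin (k+1)) := by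
        apply Fin.ext
        rw [Fin.val_zero]
        show k - 1 - (k - 1) = 0
        omega
      rwa [e0] at hlast
    -- f (y lk) = x lk also forces f (x 0) = x lk
    have keyB : ∀ f : S → S, Λ f ≠ 0 → f (y lk) = x lk → f (x 0) = x lk := by
      intro f hf hfy
      have hmf : Monotone f := hmono' f hf
      have h01 : x (0 : Fin (k+1)) ≤ y lk := by
        have h := xley' 0
        rwa [h0sub] at h
      have hcmp : f (x 0) ≤ x lk := by
        have h := hmf h01
        rwa [hfy] at h
      rcases optx f hf 0 h0lk with h | h
      · exfalso
        rw [h] at hcmp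
        rcases xle 0 _ hcmp with h' | h' | h'
        · exact h0lk (hinjx h').symm
        · exact hdisj lk 0 h'
        · exact hdisj lk _ h'
      · exact h
    -- the two events are disjoint
    have keyC : ∀ f : S → S, Λ f ≠ 0 → f (x lk) = y lk → f (y lk) = x lk → False := by
      intro f hf hfx hfy
      have hmf : Monotone f := hmono' f hf
      have h := hmf hxy_lk
      rw [hfx, hfy] at h
      exact hdisj lk lk (yle lk _ h)
    -- final mass computation
    have hxne : x lk ≠ y lk := hdisj _ _
    have hyne : y lk ≠ x lk := (hdisj _ _).symm
    have hx0ne : x (0 : Fin (k+1)) ≠ x lk := fun h => h0lk (hinjx h)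
    have sA := hrep (x lk) (y lk) hxne
    have sB := hrep (y lk) (x lk) hyne
    have sC := hrep (x 0) (x lk) hx0ne
    rw [h1] at sA
    rw [h4] at sB
    rw [h3 0 h0lk] at sC
    have eqA : ∑ f ∈ (Finset.univ.filter fun f : S → S => f (x lk) = y lk).filter
        (fun f => Λ f ≠ 0), Λ f = 1 := by
      rw [Finset.sum_filter_of_ne (fun f _ hf => hf)]
      exact sA.symm
    have eqB : ∑ f ∈ (Finset.univ.filter fun f : S → S => f (y lk) = x lk).filter
        (fun f => Λ f ≠ 0), Λ f = 1 := by
      rw [Finset.sum_filter_of_ne (fun f _ hf => hf)]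
      exact sB.symm
    have hdisjAB : Disjoint
        ((Finset.univ.filter fun f : S → S => f (x lk) = y lk).filter (fun f => Λ f ≠ 0))
        ((Finset.univ.filter fun f : S → S => f (y lk) = x lk).filter (fun f => Λ f ≠ 0)) := by
      rw [Finset.disjoint_left]
      intro f hfA hfB
      simp only [Finset.mem_filter, Finset.mem_univ, true_and] at hfA hfB
      exact keyC f hfA.2 hfA.1 hfB.1
    have hsubC : ((Finset.univ.filter fun f : S → S => f (x lk) = y lk).filter (fun f => Λ f ≠ 0))
        ∪ ((Finset.univ.filter fun f : S → S => f (y lk) = x lk).filter (fun f => Λ f ≠ 0))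
        ⊆ Finset.univ.filter (fun f : S → S => f (x 0) = x lk) := by
      intro f hf
      simp only [Finset.mem_union, Finset.mem_filter, Finset.mem_univ, true_and] at hf ⊢
      rcases hf with ⟨h1', h2'⟩ | ⟨h1', h2'⟩
      · exact chain f h2' h1'
      · exact keyB f h2' h1'
    have hunion := Finset.sum_union (f := Λ) hdisjAB
    have hle3 := Finset.sum_le_sum_of_subset_of_nonneg hsubC (fun i _ _ => hΛnn i)
    rw [hunion, eqA, eqB, ← sC] at hle3
    linarith
end

section
/- Let S be a connected finite poset and φ a monotone RDSI whose one-point motions are irreducible Markov chains. Then the coalescence time T(ω) := inf{t > 0 : φ(t, θ_{−t}ω) is constant} is finite ℙ-almost surely. -/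
open Finset

section AuxPoset
variable {S : Type*} [Fintype S] [DecidableEq S] [PartialOrder S]

omit [Fintype S] [DecidableEq S] in
lemma aux_exists_maximal [Finite S] (b : S) :
    ∃ m : S, b ≤ m ∧ ∀ x : S, m ≤ x → x = m := by
  obtain ⟨m, hbm, hmax⟩ :=
    Finite.exists_le_maximal (p := fun _ : S => True) (a := b) trivial
  exact ⟨m, hbm, fun x hx => le_antisymm (hmax.2 trivial hx) hx⟩

omit [Fintype S] [DecidableEq S] in
lemma aux_pair (f : S → S) (hf : Monotone f)
    (hconn : ∀ u v : S, Relation.ReflTransGen (fun p q : S => p ≤ q ∨ q ≤ p) u v)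
    {u v : S} (huv : f u ≠ f v) :
    ∃ a b : S, a ≠ b ∧ a ≤ b ∧ a ∈ Set.range f ∧ b ∈ Set.range f := by
  have key : ∀ x y : S, Relation.ReflTransGen (fun p q : S => p ≤ q ∨ q ≤ p) x y →
      f x = f y ∨ ∃ a b : S, a ≠ b ∧ a ≤ b ∧ a ∈ Set.range f ∧ b ∈ Set.range f := by
    intro x y h
    induction h with
    | refl => exact Or.inl rfl
    | @tail p q hxp hpq ih =>
      rcases ih with ih | ih
      · by_cases hpqf : f p = f q
        · exact Or.inl (ih.trans hpqf)
        · rcases hpq with h1 | h1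
          · exact Or.inr ⟨f p, f q, hpqf, hf h1, ⟨p, rfl⟩, ⟨q, rfl⟩⟩
          · exact Or.inr ⟨f q, f p, fun h => hpqf h.symm, hf h1, ⟨q, rfl⟩, ⟨p, rfl⟩⟩
      · exact Or.inr ih
  rcases key u v (hconn u v) with h | h
  · exact absurd h huv
  · exact h

omit [Fintype S] [PartialOrder S] in
lemma aux_card_drop (h : S → S) {s : Finset S} {a b : S} (ha : a ∈ s) (hb : b ∈ s)
    (hab : a ≠ b) (hh : h a = h b) : (s.image h).card < s.card := by
  have hsub : s.image h ⊆ (s.erase b).image h := by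
    intro y hy
    obtain ⟨x, hx, rfl⟩ := Finset.mem_image.mp hy
    by_cases hxb : x = b
    · subst hxb
      exact Finset.mem_image.mpr ⟨a, Finset.mem_erase.mpr ⟨hab, ha⟩, hh⟩
    · exact Finset.mem_image.mpr ⟨x, Finset.mem_erase.mpr ⟨hxb, hx⟩, rfl⟩
  calc (s.image h).card ≤ ((s.erase b).image h).card := Finset.card_le_card hsub
    _ ≤ (s.erase b).card := Finset.card_image_le
    _ < s.card := Finset.card_erase_lt_of_mem hb

end AuxPoset

open MeasureTheory ProbabilityTheory
open scoped ENNReal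

/-- **Theorem 2.8.** Let `S` be a connected finite poset and `φ` a monotone RDSI
whose one-point motions are irreducible Markov chains (so all transition
probabilities at positive times are positive).  Then the coalescence time
`T(ω) = inf{t > 0 : φ(t, θ_{-t} ω) is constant}` is finite `μ`-a.s., i.e. with
probability one there is some `t > 0` at which `φ(t, θ_{-t}·)` is constant. -/
theorem stmt15 {S Ω : Type*} [Fintype S] [DecidableEq S] [PartialOrder S]
    [Nonempty S] [MeasurableSpace Ω] (μ : Measure Ω) [IsProbabilityMeasure μ]
    (θ : ℝ → Ω → Ω) (φ : ℝ → Ω → S → S)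
    (hθgrp : ∀ s t : ℝ, θ (s + t) = θ s ∘ θ t) (hθ0 : θ 0 = id)
    (hθpres : ∀ t : ℝ, MeasurePreserving (θ t) μ μ)
    (hφ0 : ∀ ω, φ 0 ω = id)
    (hcoc : ∀ s t : ℝ, 0 ≤ s → 0 ≤ t → ∀ ω, φ (t + s) ω = φ t (θ s ω) ∘ φ s ω)
    (hmono : ∀ (t : ℝ) (ω : Ω), Monotone (φ t ω))
    (hmeas : ∀ (t : ℝ) (g : S → S), MeasurableSet {ω | φ t ω = g})
    (hindep : ∀ (n : ℕ) (t : ℕ → ℝ), StrictMono t →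
      iIndepFun (m := fun _ : Fin n => (⊤ : MeasurableSpace (S → S)))
        (fun (i : Fin n) ω => φ (t (i + 1) - t i) (θ (t i) ω)) μ)
    (hirr : ∀ (u v : S) (s : ℝ), 0 < s → 0 < μ {ω | φ s ω u = v})
    (hconn : ∀ u v : S,
      Relation.ReflTransGen (fun p q : S => p ≤ q ∨ q ≤ p) u v) :
    μ {ω | ∃ t : ℝ, 0 < t ∧ ∃ s0 : S, ∀ u : S, φ t (θ (-t) ω) u = s0} = 1 := by
  classical
  set N : ℕ := Fintype.card S with hN
  -- measurability helper
  have meas_pre : ∀ (t : ℝ) (T : Set (S → S)), MeasurableSet {ω | φ t ω ∈ T} := by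
    intro t T
    have hT : {ω | φ t ω ∈ T} = ⋃ f ∈ T, {ω | φ t ω = f} := by
      ext ω; simp
    rw [hT]
    exact MeasurableSet.biUnion (Set.to_countable T) fun f _ => hmeas t f
  -- the key induction: positive probability of image-size decrease
  have inner : ∀ k : ℕ,
      0 < μ {ω | ((Finset.univ : Finset S).image (φ (k : ℝ) ω)).card ≤ max 1 (N - k)} := by
    intro k
    induction k with
    | zero =>
      have : {ω | ((Finset.univ : Finset S).image (φ ((0 : ℕ) : ℝ) ω)).card ≤ max 1 (N - 0)}
          = Set.univ := by
        ext ω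
        simp only [Set.mem_setOf_eq, Set.mem_univ, iff_true, Nat.cast_zero, hφ0]
        rw [Finset.image_id]
        simpa [hN] using le_max_right 1 N
      rw [this]
      simp
    | succ k ih =>
      -- pick a map g with positive probability and small image
      set W : Set Ω :=
        {ω | ((Finset.univ : Finset S).image (φ (k : ℝ) ω)).card ≤ max 1 (N - k)} with hW
      have hex : ∃ g : S → S, 0 < μ ({ω | φ (k : ℝ) ω = g} ∩ W) := by
        by_contra hcon
        push_neg at hcon
        have hz : ∀ g : S → S, μ ({ω | φ (k : ℝ) ω = g} ∩ W) = 0 :=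
          fun g => le_antisymm (hcon g) (zero_le')
        have hcup : (⋃ g : S → S, ({ω | φ (k : ℝ) ω = g} ∩ W)) = W := by
          ext ω
          simp only [Set.mem_iUnion, Set.mem_inter_iff, Set.mem_setOf_eq]
          exact ⟨fun ⟨g, _, h2⟩ => h2, fun h => ⟨φ (k : ℝ) ω, rfl, h⟩⟩
        have := measure_iUnion_null hz
        rw [hcup] at this
        exact ih.ne' this
      obtain ⟨g, hgpos⟩ := hex
      obtain ⟨ω₀, hω₀g, hω₀W⟩ := nonempty_of_measure_ne_zero hgpos.ne'
      have hgmono : Monotone g := hω₀g ▸ hmono (k : ℝ) ω₀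
      have hg' : φ (k : ℝ) ω₀ = g := hω₀g
      have hcard : ((Finset.univ : Finset S).image g).card ≤ max 1 (N - k) := by
        have h := hω₀W
        rw [hW] at h
        simp only [Set.mem_setOf_eq] at h
        rwa [hg'] at h
      have hpos' : 0 < μ {ω | φ (k : ℝ) ω = g} :=
        lt_of_lt_of_le hgpos (measure_mono Set.inter_subset_left)
      -- composition identity
      have hcomp : ∀ ω, φ ((k + 1 : ℕ) : ℝ) ω = φ 1 (θ (k : ℝ) ω) ∘ φ (k : ℝ) ω := by
        intro ω
        have h := hcoc (k : ℝ) 1 (by positivity) zero_le_one ω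
        have hcast : ((k + 1 : ℕ) : ℝ) = 1 + (k : ℝ) := by push_cast; ring
        rw [hcast]
        exact h
      by_cases hsmall : ((Finset.univ : Finset S).image g).card ≤ max 1 (N - (k + 1))
      · refine lt_of_lt_of_le hpos' (measure_mono ?_)
        intro ω hω
        simp only [Set.mem_setOf_eq] at hω ⊢
        rw [hcomp ω, hω, ← Finset.image_image]
        exact le_trans Finset.card_image_le hsmall
      · -- need to coalesce a comparable pair
        have hge2 : 2 ≤ ((Finset.univ : Finset S).image g).card := by
          rcases Nat.lt_or_ge ((Finset.univ : Finset S).image g).card 2 with h | h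
          · exfalso
            apply hsmall
            have : ((Finset.univ : Finset S).image g).card ≤ 1 := by omega
            exact le_trans this (le_max_left _ _)
          · exact h
        obtain ⟨x, hx, y, hy, hxy⟩ := Finset.one_lt_card.mp hge2
        obtain ⟨u, -, hu⟩ := Finset.mem_image.mp hx
        obtain ⟨v, -, hv⟩ := Finset.mem_image.mp hy
        have huv : g u ≠ g v := by rw [hu, hv]; exact hxy
        obtain ⟨a, b, hab, hle, ⟨ua, hua⟩, ⟨ub, hub⟩⟩ := aux_pair g hgmono hconn huv
        obtain ⟨m, hbm, hmax⟩ := aux_exists_maximal b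
        -- second event
        set E2 : Set Ω := {ω | φ 1 (θ (k : ℝ) ω) a = m} with hE2
        have hTset : {ω | φ 1 ω a = m} = {ω | φ 1 ω ∈ {h : S → S | h a = m}} := rfl
        have hE2meas : MeasurableSet E2 := by
          have : E2 = θ (k : ℝ) ⁻¹' {ω | φ 1 ω a = m} := rfl
          rw [this, hTset]
          exact (hθpres (k : ℝ)).measurable (meas_pre 1 _)
        have hE2μ : μ E2 = μ {ω | φ 1 ω a = m} := by
          have h1 : E2 = θ (k : ℝ) ⁻¹' {ω | φ 1 ω a = m} := rfl
          rw [h1, hTset]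
          exact (hθpres (k : ℝ)).measure_preimage (meas_pre 1 _).nullMeasurableSet
        have hE2pos : 0 < μ E2 := by rw [hE2μ]; exact hirr a m 1 one_pos
        -- independence product
        have hprod : μ ({ω | φ (k : ℝ) ω = g} ∩ E2)
            = μ {ω | φ (k : ℝ) ω = g} * μ E2 := by
          rcases Nat.eq_zero_or_pos k with rfl | hk
          · have hgid : g = id := by
              have h : φ ((0 : ℕ) : ℝ) ω₀ = g := hω₀g
              rw [Nat.cast_zero, hφ0] at h
              exact h.symm
            have : {ω | φ ((0 : ℕ) : ℝ) ω = g} = Set.univ := by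
              ext ω; simp [Nat.cast_zero, hφ0, hgid]
            rw [this, Set.univ_inter, measure_univ, one_mul]
          · set t : ℕ → ℝ := fun i => if i = 0 then 0 else (k : ℝ) + i - 1 with ht_def
            have ht0 : t 0 = 0 := by simp [ht_def]
            have ht1 : t 1 = (k : ℝ) := by norm_num [ht_def]
            have ht2 : t 2 = (k : ℝ) + 1 := by
              simp only [ht_def]
              norm_num
              ring
            have hts : StrictMono t := by
              apply strictMono_nat_of_lt_succ
              intro i
              rcases Nat.eq_zero_or_pos i with rfl | hi
              · rw [ht0, ht1]; exact_mod_cast hk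
              · simp only [ht_def, if_neg hi.ne', if_neg (Nat.succ_ne_zero i)]
                push_cast
                linarith
            have hI := (hindep 2 t hts).indepFun (show (0 : Fin 2) ≠ 1 by decide)
            have hmul := hI.measure_inter_preimage_eq_mul
              (s := {g}) (t := {h : S → S | h a = m})
              MeasurableSpace.measurableSet_top MeasurableSpace.measurableSet_top
            have e0 : ((fun (i : Fin 2) ω => φ (t (i + 1) - t i) (θ (t i) ω)) 0) ⁻¹' {g}
                = {ω | φ (k : ℝ) ω = g} := by
              ext ω
              simp [ht0, ht1, hθ0]
            have hd : t (1 + 1) - t 1 = 1 := by rw [ht1, show t (1+1) = t 2 from rfl, ht2]; ring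
            have e1 : ((fun (i : Fin 2) ω => φ (t (i + 1) - t i) (θ (t i) ω)) 1) ⁻¹'
                {h : S → S | h a = m} = E2 := by
              ext ω
              simp only [Set.mem_preimage, Set.mem_setOf_eq, hE2, Fin.val_one]
              rw [hd, ht1]
            rw [e0, e1] at hmul
            exact hmul
        have hinterpos : 0 < μ ({ω | φ (k : ℝ) ω = g} ∩ E2) := by
          rw [hprod]
          exact ENNReal.mul_pos hpos'.ne' hE2pos.ne'
        refine lt_of_lt_of_le hinterpos (measure_mono ?_)
        rintro ω ⟨hωg, hωa⟩
        simp only [Set.mem_setOf_eq] at hωg hωa ⊢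
        set F : S → S := φ 1 (θ (k : ℝ) ω) with hF
        have hFa : F a = m := hωa
        have hFb : F b = m := by
          have h1 : F a ≤ F b := hmono 1 (θ (k : ℝ) ω) hle
          rw [hFa] at h1
          exact hmax _ h1
        have ha' : a ∈ (Finset.univ : Finset S).image g :=
          Finset.mem_image.mpr ⟨ua, Finset.mem_univ _, hua⟩
        have hb' : b ∈ (Finset.univ : Finset S).image g :=
          Finset.mem_image.mpr ⟨ub, Finset.mem_univ _, hub⟩
        have hdrop := aux_card_drop F ha' hb' hab (hFa.trans hFb.symm)
        have hNk2 : 2 ≤ N - k := by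
          by_contra hcon
          have : max 1 (N - k) = 1 := by omega
          omega
        have hmaxk : max 1 (N - k) = N - k := max_eq_right (by omega)
        rw [hcomp ω, hωg, ← Finset.image_image]
        have hfin : (((Finset.univ : Finset S).image g).image F).card ≤ N - (k + 1) := by
          omega
        exact le_trans hfin (le_max_right _ _)
  -- the constant-map event at time c
  set c : ℕ := max (N - 1) 1 with hc
  have hc1 : 1 ≤ c := le_max_right _ _
  set Con : Set Ω := {ω | ∃ s0 : S, ∀ u : S, φ (c : ℝ) ω u = s0} with hCon
  have hConmeas : MeasurableSet Con := by
    have : Con = {ω | φ (c : ℝ) ω ∈ {f : S → S | ∃ s0 : S, ∀ u : S, f u = s0}} := rfl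
    rw [this]; exact meas_pre _ _
  have hq : 0 < μ Con := by
    refine lt_of_lt_of_le (inner c) (measure_mono ?_)
    intro ω hω
    simp only [Set.mem_setOf_eq] at hω ⊢
    have hNc : N - c ≤ 1 := by omega
    have hmax1 : max 1 (N - c) = 1 := by omega
    rw [hmax1] at hω
    obtain ⟨u0⟩ := (inferInstance : Nonempty S)
    refine ⟨φ (c : ℝ) ω u0, fun u => ?_⟩
    exact Finset.card_le_one.mp hω _ (Finset.mem_image_of_mem _ (Finset.mem_univ u))
      _ (Finset.mem_image_of_mem _ (Finset.mem_univ u0))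
  set q : ℝ≥0∞ := μ Con with hqdef
  set A : Set Ω := {ω | ∃ t : ℝ, 0 < t ∧ ∃ s0 : S, ∀ u : S, φ t (θ (-t) ω) u = s0} with hA
  have hcR : (0 : ℝ) < (c : ℝ) := by exact_mod_cast hc1
  -- main estimate
  have key : ∀ M : ℕ, μ Aᶜ ≤ (1 - q) ^ M := by
    intro M
    set t : ℕ → ℝ := fun i => ((i : ℝ) - M) * c with ht_def
    have hts : StrictMono t := by
      intro i j hij
      have hij' : (i : ℝ) < j := by exact_mod_cast hij
      exact mul_lt_mul_of_pos_right (by linarith) hcR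
    have hmul := (hindep M t hts).measure_inter_preimage_eq_mul
      (Finset.univ)
      (sets := fun _ => {f : S → S | ∃ s0 : S, ∀ u : S, f u = s0}ᶜ)
      (fun i _ => MeasurableSpace.measurableSet_top)
    have hfac : ∀ i : Fin M,
        μ ((fun ω => φ (t (i + 1) - t i) (θ (t i) ω)) ⁻¹'
          {f : S → S | ∃ s0 : S, ∀ u : S, f u = s0}ᶜ) = 1 - q := by
      intro i
      have htd : t ((i : ℕ) + 1) - t (i : ℕ) = (c : ℝ) := by
        simp only [ht_def]; push_cast; ring
      have hpre : ((fun ω => φ (t (i + 1) - t i) (θ (t i) ω)) ⁻¹'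
            {f : S → S | ∃ s0 : S, ∀ u : S, f u = s0}ᶜ)
          = θ (t (i : ℕ)) ⁻¹' {ω | φ (c : ℝ) ω ∈ {f : S → S | ∃ s0 : S, ∀ u : S, f u = s0}ᶜ} := by
        rw [htd]; rfl
      rw [hpre, (hθpres _).measure_preimage (meas_pre _ _).nullMeasurableSet]
      have hCc : {ω | φ (c : ℝ) ω ∈ {f : S → S | ∃ s0 : S, ∀ u : S, f u = s0}ᶜ} = Conᶜ := by
        ext ω; simp [hCon]
      rw [hCc, prob_compl_eq_one_sub hConmeas]
    have hsub : Aᶜ ⊆ ⋂ i ∈ (Finset.univ : Finset (Fin M)),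
        (fun ω => φ (t (i + 1) - t i) (θ (t i) ω)) ⁻¹'
          {f : S → S | ∃ s0 : S, ∀ u : S, f u = s0}ᶜ := by
      intro ω hω
      simp only [Set.mem_iInter, Set.mem_preimage, Set.mem_compl_iff, Set.mem_setOf_eq]
      intro i _
      intro hcon
      apply hω
      obtain ⟨s0, hs0⟩ := hcon
      have htd : t ((i : ℕ) + 1) - t (i : ℕ) = (c : ℝ) := by
        simp only [ht_def]; push_cast; ring
      rw [htd] at hs0
      -- build a witness for A
      set tt : ℝ := ((M : ℝ) - i) * c with htt
      have hiM : ((i : ℕ) : ℝ) < (M : ℝ) := by exact_mod_cast i.isLt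
      have hiM1 : ((i : ℕ) : ℝ) + 1 ≤ (M : ℝ) := by
        have : (i : ℕ) + 1 ≤ M := i.isLt
        exact_mod_cast this
      have httpos : 0 < tt := mul_pos (by linarith) hcR
      have hnegtt : -tt = t (i : ℕ) := by simp only [ht_def, htt]; ring
      have hdec := hcoc (c : ℝ) (tt - c) (le_of_lt hcR)
        (by
          have : tt - (c : ℝ) = ((M : ℝ) - i - 1) * c := by rw [htt]; ring
          rw [this]
          exact mul_nonneg (by linarith) (le_of_lt hcR))
        (θ (t (i : ℕ)) ω)
      have hsum : tt - (c : ℝ) + (c : ℝ) = tt := by ring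
      rw [hsum] at hdec
      refine ⟨tt, httpos, φ (tt - c) (θ (c : ℝ) (θ (t (i : ℕ)) ω)) s0, fun u => ?_⟩
      rw [hnegtt, hdec]
      simp only [Function.comp_apply, hs0 u]
    calc μ Aᶜ ≤ μ (⋂ i ∈ (Finset.univ : Finset (Fin M)),
          (fun ω => φ (t (i + 1) - t i) (θ (t i) ω)) ⁻¹'
            {f : S → S | ∃ s0 : S, ∀ u : S, f u = s0}ᶜ) := measure_mono hsub
      _ = ∏ i ∈ (Finset.univ : Finset (Fin M)),
          μ ((fun ω => φ (t (i + 1) - t i) (θ (t i) ω)) ⁻¹'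
            {f : S → S | ∃ s0 : S, ∀ u : S, f u = s0}ᶜ) := hmul
      _ = (1 - q) ^ M := by
          rw [Finset.prod_congr rfl fun i _ => hfac i]
          simp
  have hlt : (1 : ℝ≥0∞) - q < 1 :=
    ENNReal.sub_lt_self ENNReal.one_ne_top one_ne_zero hq.ne'
  have h0 : μ Aᶜ = 0 := by
    refine le_antisymm ?_ (zero_le')
    exact ge_of_tendsto (ENNReal.tendsto_pow_atTop_nhds_zero_of_lt_one hlt)
      (Filter.Eventually.of_forall key)
  have h1 : (1 : ℝ≥0∞) ≤ μ A := by
    have hle := measure_union_le (μ := μ) A Aᶜ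
    rw [Set.union_compl_self, measure_univ, h0, add_zero] at hle
    exact hle
  exact le_antisymm prob_le_one h1
end
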